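/- arXiv:2207.11443 — 8 statements merged into one kernel-verified Lean document; each statement's English description precedes it below -/
import Mathlib

section
/- Let $0\to\mathcal{P}\hookrightarrow\mathcal{L}\xrightarrow{\pi}\mathcal{Q}\to 0$ be an abelian extension of 3-Lie superalgebras with $[\mathcal{P},\mathcal{P},\mathcal{L}]=0$, and let $s:\mathcal{Q}\to\mathcal{L}$ be an even linear section of $\pi$. Then the map $\Phi:\wedge^2\mathcal{Q}\to\mathrm{End}(\mathcal{P})$ defined by $\Phi(x,y)(v)=[s(x),s(y),v]_{\mathcal{L}}$ is a representation of $\mathcal{Q}$ on $\mathcal{P}$, and it is independent of the choice of section $s$. -/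
/-! Common definitions: 3-Lie superalgebras, representations, cohomology operators. -/

def gsign (k : Type*) [Field k] (a : ZMod 2) : k := if a = 0 then 1 else -1

/-- A 3-Lie superalgebra: a `ℤ₂`-graded vector space with a trilinear graded
skew-symmetric bracket satisfying the graded fundamental (Filippov) identity. -/
structure TLSA (k G : Type*) [Field k] [AddCommGroup G] [Module k G] where
  br : G → G → G → G
  gr : ZMod 2 → Submodule k G
  decomp : DirectSum.IsInternal gr
  lin₁ : ∀ y z, IsLinearMap k fun x => br x y z
  lin₂ : ∀ x z, IsLinearMap k fun y => br x y z
  lin₃ : ∀ x y, IsLinearMap k fun z => br x y z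
  grade : ∀ (a b c : ZMod 2) (x y z : G), x ∈ gr a → y ∈ gr b → z ∈ gr c →
    br x y z ∈ gr (a + b + c)
  skew₁ : ∀ (a b : ZMod 2) (x y z : G), x ∈ gr a → y ∈ gr b →
    br x y z = - gsign k (a * b) • br y x z
  skew₂ : ∀ (b c : ZMod 2) (x y z : G), y ∈ gr b → z ∈ gr c →
    br x y z = - gsign k (b * c) • br x z y
  fund : ∀ (a b c d e : ZMod 2) (x1 x2 x3 x4 x5 : G),
    x1 ∈ gr a → x2 ∈ gr b → x3 ∈ gr c → x4 ∈ gr d → x5 ∈ gr e →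
    br x1 x2 (br x3 x4 x5) =
      br (br x1 x2 x3) x4 x5 + gsign k (c * (a + b)) • br x3 (br x1 x2 x4) x5
        + gsign k ((a + b) * (c + d)) • br x3 x4 (br x1 x2 x5)

section Defs
variable {k G P : Type*} [Field k] [AddCommGroup G] [Module k G] [AddCommGroup P] [Module k P]

/-- Trilinearity of a map of three variables. -/
def Trilin3 (k : Type*) [Field k] {G P : Type*} [AddCommGroup G] [Module k G]
    [AddCommGroup P] [Module k P] (f : G → G → G → P) : Prop :=
  (∀ y z, IsLinearMap k fun x => f x y z) ∧ (∀ x z, IsLinearMap k fun y => f x y z) ∧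
    ∀ x y, IsLinearMap k (f x y)

/-- A representation of the 3-Lie superalgebra `T` on the graded space `(P, Pgr)`. -/
def IsTLSARep (T : TLSA k G) (Pgr : ZMod 2 → Submodule k P) (Φ : G → G → P → P) : Prop :=
  (∀ y v, IsLinearMap k fun x => Φ x y v) ∧
  (∀ x v, IsLinearMap k fun y => Φ x y v) ∧
  (∀ x y, IsLinearMap k (Φ x y)) ∧
  (∀ (a b c : ZMod 2) x y v, x ∈ T.gr a → y ∈ T.gr b → v ∈ Pgr c → Φ x y v ∈ Pgr (a + b + c)) ∧
  (∀ (a b : ZMod 2) x y, x ∈ T.gr a → y ∈ T.gr b → ∀ v, Φ x y v = - gsign k (a * b) • Φ y x v) ∧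
  (∀ (a b c d : ZMod 2) x1 x2 x3 x4, x1 ∈ T.gr a → x2 ∈ T.gr b → x3 ∈ T.gr c → x4 ∈ T.gr d → ∀ v,
    Φ x1 x2 (Φ x3 x4 v) = Φ (T.br x1 x2 x3) x4 v + gsign k (c * (a + b)) • Φ x3 (T.br x1 x2 x4) v
      + gsign k ((a + b) * (c + d)) • Φ x3 x4 (Φ x1 x2 v)) ∧
  (∀ (a b c d : ZMod 2) x1 x2 x3 x4, x1 ∈ T.gr a → x2 ∈ T.gr b → x3 ∈ T.gr c → x4 ∈ T.gr d → ∀ v,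
    Φ x1 (T.br x2 x3 x4) v = gsign k ((a + b) * (c + d)) • Φ x3 x4 (Φ x1 x2 v)
      - gsign k (a * (b + d) + c * d) • Φ x2 x4 (Φ x1 x3 v)
      + gsign k (a * (b + c)) • Φ x2 x3 (Φ x1 x4 v))

/-- The 3-cochain `Om` is even (grading-preserving). -/
def Even3 (T : TLSA k G) (Pgr : ZMod 2 → Submodule k P) (Om : G → G → G → P) : Prop :=
  ∀ (a b c : ZMod 2) x y z, x ∈ T.gr a → y ∈ T.gr b → z ∈ T.gr c → Om x y z ∈ Pgr (a + b + c)

/-- The 2-cocycle condition `δ_Φ Om = 0` for 3-Lie superalgebra cohomology. -/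
def IsCocycle2 (T : TLSA k G) (Φ : G → G → P → P) (Om : G → G → G → P) : Prop :=
  ∀ (a b c d e : ZMod 2) x1 x2 x3 x4 x5,
    x1 ∈ T.gr a → x2 ∈ T.gr b → x3 ∈ T.gr c → x4 ∈ T.gr d → x5 ∈ T.gr e →
    Om (T.br x1 x2 x3) x4 x5 + gsign k (c * (a + b)) • Om x3 (T.br x1 x2 x4) x5
      + gsign k ((a + b) * (c + d)) • Om x3 x4 (T.br x1 x2 x5) - Om x1 x2 (T.br x3 x4 x5)
    = Φ x1 x2 (Om x3 x4 x5) - gsign k ((a + b) * (c + d)) • Φ x3 x4 (Om x1 x2 x5)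
      - gsign k ((d + e) * (a + b + c)) • Φ x4 x5 (Om x1 x2 x3)
      - gsign k ((c + e) * (a + b) + e * (c + d)) • Φ x5 x3 (Om x1 x2 x4)

/-- `Om = δ_Φ μ` where `μ` is a 1-cochain of degree `μdeg`. -/
def IsDelta1 (T : TLSA k G) (Φ : G → G → P → P) (μdeg : ZMod 2) (μ : G → P)
    (Om : G → G → G → P) : Prop :=
  ∀ (a b c : ZMod 2) x y z, x ∈ T.gr a → y ∈ T.gr b → z ∈ T.gr c →
    Om x y z = - μ (T.br x y z) + gsign k (μdeg * (a + b)) • Φ x y (μ z)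
      + gsign k ((μdeg + a) * (b + c)) • Φ y z (μ x)
      + gsign k (μdeg * (a + c) + c * (a + b)) • Φ z x (μ y)

/-- A superderivation of degree `α` of the 3-Lie superalgebra `T`. -/
def IsSDer (T : TLSA k G) (α : ZMod 2) (D : G →ₗ[k] G) : Prop :=
  (∀ (a : ZMod 2) x, x ∈ T.gr a → D x ∈ T.gr (a + α)) ∧
  ∀ (a b c : ZMod 2) x y z, x ∈ T.gr a → y ∈ T.gr b → z ∈ T.gr c →
    D (T.br x y z) = T.br (D x) y z + gsign k (α * a) • T.br x (D y) z
      + gsign k (α * (a + b)) • T.br x y (D z)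

/-- Compatibility of a pair `(Dp, Dq)` of degree `α` with the representation `Φ`. -/
def Compatible (T : TLSA k G) (Pgr : ZMod 2 → Submodule k P) (Φ : G → G → P → P)
    (α : ZMod 2) (Dp : P →ₗ[k] P) (Dq : G →ₗ[k] G) : Prop :=
  ∀ (a b : ZMod 2) x y, x ∈ T.gr a → y ∈ T.gr b → ∀ v,
    Dp (Φ x y v) - gsign k (α * (a + b)) • Φ x y (Dp v)
      = Φ (Dq x) y v + gsign k (α * a) • Φ x (Dq y) v

/-- `Ob = Ob^{Om}_{(Dp,Dq)}`, the obstruction 2-cochain. -/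
def IsOb (T : TLSA k G) (α : ZMod 2) (Dp : P →ₗ[k] P) (Dq : G →ₗ[k] G)
    (Om Ob : G → G → G → P) : Prop :=
  ∀ (a b c : ZMod 2) x y z, x ∈ T.gr a → y ∈ T.gr b → z ∈ T.gr c →
    Ob x y z = Dp (Om x y z) - Om (Dq x) y z - gsign k (α * a) • Om x (Dq y) z
      - gsign k (α * (a + b)) • Om x y (Dq z)

end Defs

/-- A homomorphism of 3-Lie superalgebras: even linear and bracket-preserving. -/
def IsTLSAHom {k G1 G2 : Type*} [Field k] [AddCommGroup G1] [Module k G1]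
    [AddCommGroup G2] [Module k G2] (T1 : TLSA k G1) (T2 : TLSA k G2) (f : G1 → G2) : Prop :=
  IsLinearMap k f ∧ (∀ (a : ZMod 2) x, x ∈ T1.gr a → f x ∈ T2.gr a) ∧
    ∀ x y z, f (T1.br x y z) = T2.br (f x) (f y) (f z)

/-- An abelian extension `0 → P → L → Q → 0` of 3-Lie superalgebras with `[P,P,L] = 0`. -/
structure AbExt {k Pm Lm Qm : Type*} [Field k] [AddCommGroup Pm] [Module k Pm]
    [AddCommGroup Lm] [Module k Lm] [AddCommGroup Qm] [Module k Qm]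
    (TP : TLSA k Pm) (TL : TLSA k Lm) (TQ : TLSA k Qm) where
  i : Pm →ₗ[k] Lm
  pr : Lm →ₗ[k] Qm
  i_inj : Function.Injective i
  pr_surj : Function.Surjective pr
  exact : LinearMap.range i = LinearMap.ker pr
  i_hom : IsTLSAHom TP TL i
  pr_hom : IsTLSAHom TL TQ pr
  abelian : ∀ u v l, TL.br (i u) (i v) l = 0

/-- An even linear section of the projection of an abelian extension. -/
def IsSection {k Pm Lm Qm : Type*} [Field k] [AddCommGroup Pm] [Module k Pm]
    [AddCommGroup Lm] [Module k Lm] [AddCommGroup Qm] [Module k Qm]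
    {TP : TLSA k Pm} {TL : TLSA k Lm} {TQ : TLSA k Qm}
    (E : AbExt TP TL TQ) (s : Qm →ₗ[k] Lm) : Prop :=
  (∀ x, E.pr (s x) = x) ∧ ∀ (a : ZMod 2) x, x ∈ TQ.gr a → s x ∈ TL.gr a

variable {k Pm Lm Qm G : Type*} [Field k] [AddCommGroup Pm] [Module k Pm]
  [AddCommGroup Lm] [Module k Lm] [AddCommGroup Qm] [Module k Qm]
  [AddCommGroup G] [Module k G]


/-! ### Auxiliary lemmas -/

lemma zmod2_cases (x : ZMod 2) : x = 0 ∨ x = 1 := by revert x; decide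

lemma gsign_mul {k : Type*} [Field k] (x y : ZMod 2) :
    gsign k x * gsign k y = gsign k (x + y) := by
  rcases zmod2_cases x with rfl | rfl <;> rcases zmod2_cases y with rfl | rfl <;>
    simp [gsign, show ((1:ZMod 2)+1) = 0 from rfl, show (1:ZMod 2) ≠ 0 from by decide]

lemma decomp2 {k V : Type*} [Field k] [AddCommGroup V] [Module k V]
    {gr : ZMod 2 → Submodule k V} (h : DirectSum.IsInternal gr) (v : V) :
    ∃ v0 ∈ gr 0, ∃ v1 ∈ gr 1, v = v0 + v1 := by
  have htop : gr 0 ⊔ gr 1 = ⊤ := by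
    rw [← h.submodule_iSup_eq_top]
    apply le_antisymm
    · exact sup_le (le_iSup _ 0) (le_iSup _ 1)
    · exact iSup_le fun i => by rcases zmod2_cases i with rfl | rfl <;> simp
  have : v ∈ gr 0 ⊔ gr 1 := htop ▸ Submodule.mem_top
  rcases Submodule.mem_sup.mp this with ⟨v0, h0, v1, h1, rfl⟩
  exact ⟨v0, h0, v1, h1, rfl⟩

lemma disj2 {k V : Type*} [Field k] [AddCommGroup V] [Module k V]
    {gr : ZMod 2 → Submodule k V} (h : DirectSum.IsInternal gr) (v : V)
    (h0 : v ∈ gr 0) (h1 : v ∈ gr 1) : v = 0 := by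
  have hd : Disjoint (gr 0) (gr 1) :=
    h.submodule_iSupIndep.pairwiseDisjoint (by decide : (0 : ZMod 2) ≠ 1)
  exact Submodule.disjoint_def.mp hd v h0 h1

section Star
variable {k Lm : Type*} [Field k] [AddCommGroup Lm] [Module k Lm]

/-- The second fundamental-type identity, derived from `fund` and skew-symmetry. -/
lemma tlsa_star (TL : TLSA k Lm) (a b c d e : ZMod 2) (l1 l2 l3 l4 m : Lm)
    (h1 : l1 ∈ TL.gr a) (h2 : l2 ∈ TL.gr b) (h3 : l3 ∈ TL.gr c) (h4 : l4 ∈ TL.gr d)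
    (hm : m ∈ TL.gr e) :
    TL.br l1 (TL.br l2 l3 l4) m
      = gsign k ((a+b)*(c+d)) • TL.br l3 l4 (TL.br l1 l2 m)
        - gsign k (a*(b+d)+c*d) • TL.br l2 l4 (TL.br l1 l3 m)
        + gsign k (a*(b+c)) • TL.br l2 l3 (TL.br l1 l4 m) := by
  have bs1 : ∀ (t : k) x y z, TL.br (t • x) y z = t • TL.br x y z :=
    fun t x y z => (TL.lin₁ y z).map_smul t x
  have bs2 : ∀ (t : k) x y z, TL.br x (t • y) z = t • TL.br x y z :=
    fun t x y z => (TL.lin₂ x z).map_smul t y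
  have bs3 : ∀ (t : k) x y z, TL.br x y (t • z) = t • TL.br x y z :=
    fun t x y z => (TL.lin₃ x y).map_smul t z
  have h234 : TL.br l2 l3 l4 ∈ TL.gr (b + c + d) := TL.grade b c d _ _ _ h2 h3 h4
  have hP2 : TL.br l1 l2 m ∈ TL.gr (a + b + e) := TL.grade a b e _ _ _ h1 h2 hm
  have hP3 : TL.br l1 l3 m ∈ TL.gr (a + c + e) := TL.grade a c e _ _ _ h1 h3 hm
  have hA : TL.br l1 (TL.br l2 l3 l4) m
      = - gsign k ((b+c+d)*e) • TL.br l1 m (TL.br l2 l3 l4) :=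
    TL.skew₂ (b+c+d) e l1 (TL.br l2 l3 l4) m h234 hm
  have hF := TL.fund a e b c d l1 m l2 l3 l4 h1 hm h2 h3 h4
  have h12 : TL.br l1 m l2 = - gsign k (e*b) • TL.br l1 l2 m :=
    TL.skew₂ e b l1 m l2 hm h2
  have h13 : TL.br l1 m l3 = - gsign k (e*c) • TL.br l1 l3 m :=
    TL.skew₂ e c l1 m l3 hm h3
  have h14 : TL.br l1 m l4 = - gsign k (e*d) • TL.br l1 l4 m :=
    TL.skew₂ e d l1 m l4 hm h4
  have hT1 : TL.br (TL.br l1 l2 m) l3 l4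
      = (gsign k ((a+b+e)*c) * gsign k ((a+b+e)*d)) • TL.br l3 l4 (TL.br l1 l2 m) := by
    rw [TL.skew₁ (a+b+e) c (TL.br l1 l2 m) l3 l4 hP2 h3,
        TL.skew₂ (a+b+e) d l3 (TL.br l1 l2 m) l4 hP2 h4]
    rw [smul_smul]
    ring_nf
  have hT2 : TL.br l2 (TL.br l1 l3 m) l4
      = - gsign k ((a+c+e)*d) • TL.br l2 l4 (TL.br l1 l3 m) :=
    TL.skew₂ (a+c+e) d l2 (TL.br l1 l3 m) l4 hP3 h4
  rw [hA, hF, h12, h13, h14, bs1, bs2, bs3, hT1, hT2]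
  match_scalars <;>
  · rcases zmod2_cases a with rfl | rfl <;> rcases zmod2_cases b with rfl | rfl <;>
      rcases zmod2_cases c with rfl | rfl <;> rcases zmod2_cases d with rfl | rfl <;>
      rcases zmod2_cases e with rfl | rfl <;>
      simp (config := { decide := true }) [gsign] <;> try ring_nf

end Star

section AuxExt
variable {k Pm Lm Qm : Type*} [Field k] [AddCommGroup Pm] [Module k Pm]
  [AddCommGroup Lm] [Module k Lm] [AddCommGroup Qm] [Module k Qm]
  {TP : TLSA k Pm} {TL : TLSA k Lm} {TQ : TLSA k Qm}

lemma ab13 (E : AbExt TP TL TQ) (u : Pm) (l : Lm) (v : Pm) :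
    TL.br (E.i u) l (E.i v) = 0 := by
  have key : ∀ (b c : ZMod 2) (l' : Lm) (v' : Pm), l' ∈ TL.gr b → E.i v' ∈ TL.gr c →
      TL.br (E.i u) l' (E.i v') = 0 := by
    intro b c l' v' hl hv
    rw [TL.skew₂ b c (E.i u) l' (E.i v') hl hv, E.abelian, smul_zero]
  obtain ⟨l0, hl0, l1, hl1, rfl⟩ := decomp2 TL.decomp l
  obtain ⟨v0, hv0, v1, hv1, rfl⟩ := decomp2 TP.decomp v
  have iv0 : E.i v0 ∈ TL.gr 0 := E.i_hom.2.1 0 v0 hv0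
  have iv1 : E.i v1 ∈ TL.gr 1 := E.i_hom.2.1 1 v1 hv1
  have e2 : ∀ x z y y', TL.br x (y + y') z = TL.br x y z + TL.br x y' z :=
    fun x z y y' => (TL.lin₂ x z).map_add y y'
  have e3 : ∀ x y z z', TL.br x y (z + z') = TL.br x y z + TL.br x y z' :=
    fun x y z z' => (TL.lin₃ x y).map_add z z'
  rw [map_add, e2, e3, e3, key 0 0 l0 v0 hl0 iv0, key 0 1 l0 v1 hl0 iv1,
      key 1 0 l1 v0 hl1 iv0, key 1 1 l1 v1 hl1 iv1]
  simp

lemma ab23 (E : AbExt TP TL TQ) (l : Lm) (u v : Pm) :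
    TL.br l (E.i u) (E.i v) = 0 := by
  obtain ⟨l0, hl0, l1, hl1, rfl⟩ := decomp2 TL.decomp l
  obtain ⟨u0, hu0, u1, hu1, rfl⟩ := decomp2 TP.decomp u
  have iu0 : E.i u0 ∈ TL.gr 0 := E.i_hom.2.1 0 u0 hu0
  have iu1 : E.i u1 ∈ TL.gr 1 := E.i_hom.2.1 1 u1 hu1
  have e1 : ∀ y z x x', TL.br (x + x') y z = TL.br x y z + TL.br x' y z :=
    fun y z x x' => (TL.lin₁ y z).map_add x x'
  have e2 : ∀ x z y y', TL.br x (y + y') z = TL.br x y z + TL.br x y' z :=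
    fun x z y y' => (TL.lin₂ x z).map_add y y'
  have key : ∀ (b c : ZMod 2) (l' : Lm) (u' : Pm), l' ∈ TL.gr b → E.i u' ∈ TL.gr c →
      TL.br l' (E.i u') (E.i v) = 0 := by
    intro b c l' u' hl hu
    rw [TL.skew₁ b c l' (E.i u') (E.i v) hl hu, ab13 E u' l' v, smul_zero]
  rw [map_add, e1, e2, e2, key 0 0 l0 u0 hl0 iu0, key 0 1 l0 u1 hl0 iu1,
      key 1 0 l1 u0 hl1 iu0, key 1 1 l1 u1 hl1 iu1]
  simp

lemma i_gr_rev (E : AbExt TP TL TQ) (c : ZMod 2) (p : Pm) (h : E.i p ∈ TL.gr c) :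
    p ∈ TP.gr c := by
  obtain ⟨p0, h0, p1, h1, rfl⟩ := decomp2 TP.decomp p
  have i0 : E.i p0 ∈ TL.gr 0 := E.i_hom.2.1 0 p0 h0
  have i1 : E.i p1 ∈ TL.gr 1 := E.i_hom.2.1 1 p1 h1
  rcases zmod2_cases c with rfl | rfl
  · have hm : E.i p1 ∈ TL.gr 0 := by
      have hsub := (TL.gr 0).sub_mem h i0
      rwa [map_add, add_sub_cancel_left] at hsub
    have hz : p1 = 0 := E.i_inj (by rw [disj2 TL.decomp _ hm i1, map_zero])
    rw [hz, add_zero]; exact h0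
  · have hm : E.i p0 ∈ TL.gr 1 := by
      have hsub := (TL.gr 1).sub_mem h i1
      rwa [map_add, add_sub_cancel_right] at hsub
    have hz : p0 = 0 := E.i_inj (by rw [disj2 TL.decomp _ i0 hm, map_zero])
    rw [hz, zero_add]; exact h1

lemma mem_range_of_pr_eq_zero (E : AbExt TP TL TQ) (l : Lm) (h : E.pr l = 0) :
    ∃ u, E.i u = l := by
  have : l ∈ LinearMap.ker E.pr := h
  rw [← E.exact] at this
  exact this

lemma section_diff (E : AbExt TP TL TQ) (s : Qm →ₗ[k] Lm) (hs : IsSection E s)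
    (x y z : Qm) :
    ∃ u, s (TQ.br x y z) = TL.br (s x) (s y) (s z) - E.i u := by
  have hz : E.pr (TL.br (s x) (s y) (s z) - s (TQ.br x y z)) = 0 := by
    rw [map_sub, E.pr_hom.2.2, hs.1, hs.1, hs.1, hs.1, sub_self]
  obtain ⟨u, hu⟩ := mem_range_of_pr_eq_zero E _ hz
  exact ⟨u, by rw [hu]; abel⟩

end AuxExt
/-- for an abelian extension with section `s`, the map
`Φ(x,y)(v) = [s(x),s(y),v]_L` is a representation of `Q` on `P`, independent of `s`. -/
theorem induced_map_is_representation
    {TP : TLSA k Pm} {TL : TLSA k Lm} {TQ : TLSA k Qm}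
    (E : AbExt TP TL TQ) (s : Qm →ₗ[k] Lm) (hs : IsSection E s)
    (Φ : Qm → Qm → Pm → Pm)
    (hΦ : ∀ x y v, E.i (Φ x y v) = TL.br (s x) (s y) (E.i v)) :
    IsTLSARep TQ TP.gr Φ ∧
      ∀ s' : Qm →ₗ[k] Lm, IsSection E s' →
        ∀ x y v, E.i (Φ x y v) = TL.br (s' x) (s' y) (E.i v) := by
  have hi := E.i_inj
  have bs3 : ∀ (t : k) x y z, TL.br x y (t • z) = t • TL.br x y z :=
    fun t x y z => (TL.lin₃ x y).map_smul t z
  have e1 : ∀ y z x x', TL.br (x + x') y z = TL.br x y z + TL.br x' y z :=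
    fun y z x x' => (TL.lin₁ y z).map_add x x'
  have e2 : ∀ x z y y', TL.br x (y + y') z = TL.br x y z + TL.br x y' z :=
    fun x z y y' => (TL.lin₂ x z).map_add y y'
  have e3 : ∀ x y z z', TL.br x y (z + z') = TL.br x y z + TL.br x y z' :=
    fun x y z z' => (TL.lin₃ x y).map_add z z'
  have d1 : ∀ y z x x', TL.br (x - x') y z = TL.br x y z - TL.br x' y z :=
    fun y z x x' => (TL.lin₁ y z).map_sub x x'
  have d2 : ∀ x z y y', TL.br x (y - y') z = TL.br x y z - TL.br x y' z :=
    fun x z y y' => (TL.lin₂ x z).map_sub y y'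
  -- linearity of Φ in each argument
  have hlin1 : ∀ y v, IsLinearMap k fun x => Φ x y v := by
    intro y v
    constructor
    · intro x x'
      apply hi
      rw [map_add, hΦ, hΦ, hΦ, map_add, e1]
    · intro t x
      apply hi
      rw [map_smul, hΦ, hΦ, map_smul, (TL.lin₁ (s y) (E.i v)).map_smul]
  have hlin2 : ∀ x v, IsLinearMap k fun y => Φ x y v := by
    intro x v
    constructor
    · intro y y'
      apply hi
      rw [map_add, hΦ, hΦ, hΦ, map_add, e2]
    · intro t y
      apply hi
      rw [map_smul, hΦ, hΦ, map_smul, (TL.lin₂ (s x) (E.i v)).map_smul]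
  have hlin3 : ∀ x y, IsLinearMap k (Φ x y) := by
    intro x y
    constructor
    · intro v v'
      apply hi
      rw [map_add, hΦ, hΦ, hΦ, map_add, e3]
    · intro t v
      apply hi
      rw [map_smul, hΦ, hΦ, map_smul, bs3]
  have φadd : ∀ x y v v', Φ x y (v + v') = Φ x y v + Φ x y v' :=
    fun x y v v' => (hlin3 x y).map_add v v'
  -- grading
  have hgrade : ∀ (a b c : ZMod 2) x y v, x ∈ TQ.gr a → y ∈ TQ.gr b → v ∈ TP.gr c →
      Φ x y v ∈ TP.gr (a + b + c) := by
    intro a b c x y v hx hy hv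
    apply i_gr_rev E
    rw [hΦ]
    exact TL.grade a b c _ _ _ (hs.2 a x hx) (hs.2 b y hy) (E.i_hom.2.1 c v hv)
  -- skew
  have hskew : ∀ (a b : ZMod 2) x y, x ∈ TQ.gr a → y ∈ TQ.gr b → ∀ v,
      Φ x y v = - gsign k (a * b) • Φ y x v := by
    intro a b x y hx hy v
    apply hi
    rw [map_smul, hΦ, hΦ]
    exact TL.skew₁ a b (s x) (s y) (E.i v) (hs.2 a x hx) (hs.2 b y hy)
  -- fund-type identity 1, homogeneous v
  have key6 : ∀ (a b c d e : ZMod 2) x1 x2 x3 x4 v,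
      x1 ∈ TQ.gr a → x2 ∈ TQ.gr b → x3 ∈ TQ.gr c → x4 ∈ TQ.gr d → v ∈ TP.gr e →
      Φ x1 x2 (Φ x3 x4 v) = Φ (TQ.br x1 x2 x3) x4 v
        + gsign k (c * (a + b)) • Φ x3 (TQ.br x1 x2 x4) v
        + gsign k ((a + b) * (c + d)) • Φ x3 x4 (Φ x1 x2 v) := by
    intro a b c d e x1 x2 x3 x4 v h1 h2 h3 h4 hv
    obtain ⟨u1, hu1⟩ := section_diff E s hs x1 x2 x3
    obtain ⟨u2, hu2⟩ := section_diff E s hs x1 x2 x4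
    apply hi
    rw [map_add, map_add, map_smul, map_smul]
    simp only [hΦ]
    rw [hu1, hu2, d1, d2, ab13 E u1 (s x4) v, ab23 E (s x3) u2 v, sub_zero, sub_zero]
    exact TL.fund a b c d e (s x1) (s x2) (s x3) (s x4) (E.i v)
      (hs.2 a x1 h1) (hs.2 b x2 h2) (hs.2 c x3 h3) (hs.2 d x4 h4) (E.i_hom.2.1 e v hv)
  have hfund1 : ∀ (a b c d : ZMod 2) x1 x2 x3 x4,
      x1 ∈ TQ.gr a → x2 ∈ TQ.gr b → x3 ∈ TQ.gr c → x4 ∈ TQ.gr d → ∀ v,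
      Φ x1 x2 (Φ x3 x4 v) = Φ (TQ.br x1 x2 x3) x4 v
        + gsign k (c * (a + b)) • Φ x3 (TQ.br x1 x2 x4) v
        + gsign k ((a + b) * (c + d)) • Φ x3 x4 (Φ x1 x2 v) := by
    intro a b c d x1 x2 x3 x4 h1 h2 h3 h4 v
    obtain ⟨v0, hv0, v1, hv1, rfl⟩ := decomp2 TP.decomp v
    simp only [φadd, smul_add]
    rw [key6 a b c d 0 x1 x2 x3 x4 v0 h1 h2 h3 h4 hv0,
        key6 a b c d 1 x1 x2 x3 x4 v1 h1 h2 h3 h4 hv1]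
    abel
  -- fund-type identity 2, homogeneous v
  have key7 : ∀ (a b c d e : ZMod 2) x1 x2 x3 x4 v,
      x1 ∈ TQ.gr a → x2 ∈ TQ.gr b → x3 ∈ TQ.gr c → x4 ∈ TQ.gr d → v ∈ TP.gr e →
      Φ x1 (TQ.br x2 x3 x4) v = gsign k ((a + b) * (c + d)) • Φ x3 x4 (Φ x1 x2 v)
        - gsign k (a * (b + d) + c * d) • Φ x2 x4 (Φ x1 x3 v)
        + gsign k (a * (b + c)) • Φ x2 x3 (Φ x1 x4 v) := by
    intro a b c d e x1 x2 x3 x4 v h1 h2 h3 h4 hv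
    obtain ⟨u, hu⟩ := section_diff E s hs x2 x3 x4
    apply hi
    rw [map_add, map_sub, map_smul, map_smul, map_smul]
    simp only [hΦ]
    rw [hu, d2, ab23 E (s x1) u v, sub_zero]
    exact tlsa_star TL a b c d e (s x1) (s x2) (s x3) (s x4) (E.i v)
      (hs.2 a x1 h1) (hs.2 b x2 h2) (hs.2 c x3 h3) (hs.2 d x4 h4) (E.i_hom.2.1 e v hv)
  have hfund2 : ∀ (a b c d : ZMod 2) x1 x2 x3 x4,
      x1 ∈ TQ.gr a → x2 ∈ TQ.gr b → x3 ∈ TQ.gr c → x4 ∈ TQ.gr d → ∀ v,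
      Φ x1 (TQ.br x2 x3 x4) v = gsign k ((a + b) * (c + d)) • Φ x3 x4 (Φ x1 x2 v)
        - gsign k (a * (b + d) + c * d) • Φ x2 x4 (Φ x1 x3 v)
        + gsign k (a * (b + c)) • Φ x2 x3 (Φ x1 x4 v) := by
    intro a b c d x1 x2 x3 x4 h1 h2 h3 h4 v
    obtain ⟨v0, hv0, v1, hv1, rfl⟩ := decomp2 TP.decomp v
    simp only [φadd, smul_add]
    rw [key7 a b c d 0 x1 x2 x3 x4 v0 h1 h2 h3 h4 hv0,
        key7 a b c d 1 x1 x2 x3 x4 v1 h1 h2 h3 h4 hv1]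
    abel
  refine ⟨⟨hlin1, hlin2, hlin3, hgrade, hskew, hfund1, hfund2⟩, ?_⟩
  -- independence of the section
  intro s' hs' x y v
  have hx : E.pr (s' x - s x) = 0 := by rw [map_sub, hs'.1, hs.1, sub_self]
  have hy : E.pr (s' y - s y) = 0 := by rw [map_sub, hs'.1, hs.1, sub_self]
  obtain ⟨ux, hux⟩ := mem_range_of_pr_eq_zero E _ hx
  obtain ⟨uy, huy⟩ := mem_range_of_pr_eq_zero E _ hy
  have hsx : s' x = s x + E.i ux := by rw [hux]; abel
  have hsy : s' y = s y + E.i uy := by rw [huy]; abel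
  rw [hΦ, hsx, hsy, e1, e2, e2, ab23 E (s x) uy v, ab13 E ux (s y) v,
      E.abelian ux uy (E.i v)]
  simp
end

section
/- Let $0\to\mathcal{P}\hookrightarrow\mathcal{L}\xrightarrow{\pi}\mathcal{Q}\to 0$ be an abelian extension of 3-Lie superalgebras with $[\mathcal{P},\mathcal{P},\mathcal{L}]=0$ and let $s$ be an even section of $\pi$. Then the map $\Omega:\wedge^3\mathcal{Q}\to\mathcal{P}$, $\Omega(x,y,z)=[s(x),s(y),s(z)]_{\mathcal{L}}-s([x,y,z]_{\mathcal{Q}})$, takes values in $\mathcal{P}$ and is a 2-cocycle with respect to the induced representation $\Phi(x,y)(v)=[s(x),s(y),v]_{\mathcal{L}}$, i.e. $\delta_{\Phi}\Omega = 0$. -/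
variable {k Pm Lm Qm G : Type*} [Field k] [AddCommGroup Pm] [Module k Pm]
  [AddCommGroup Lm] [Module k Lm] [AddCommGroup Qm] [Module k Qm]
  [AddCommGroup G] [Module k G]

lemma gsign_two_zmod : (1 + 1 : ZMod 2) = 0 := rfl

set_option maxHeartbeats 1600000 in
/-- `Ω(x,y,z) = [s(x),s(y),s(z)]_L - s([x,y,z]_Q)` takes values in `P`
and is a 2-cocycle for the induced representation. -/
theorem extension_cocycle
    {TP : TLSA k Pm} {TL : TLSA k Lm} {TQ : TLSA k Qm}
    (E : AbExt TP TL TQ) (s : Qm →ₗ[k] Lm) (hs : IsSection E s)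
    (Φ : Qm → Qm → Pm → Pm)
    (hΦ : ∀ x y v, E.i (Φ x y v) = TL.br (s x) (s y) (E.i v))
    (Om : Qm → Qm → Qm → Pm)
    (hOm : ∀ x y z, E.i (Om x y z) = TL.br (s x) (s y) (s z) - s (TQ.br x y z)) :
    (∀ x y z, TL.br (s x) (s y) (s z) - s (TQ.br x y z) ∈ LinearMap.range E.i) ∧
      IsCocycle2 TQ Φ Om := by
  constructor
  · intro x y z
    rw [E.exact, LinearMap.mem_ker, map_sub, E.pr_hom.2.2, hs.1, hs.1, hs.1, hs.1, sub_self]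
  · intro a b c d e x1 x2 x3 x4 x5 h1 h2 h3 h4 h5
    obtain ⟨hsec, hsg⟩ := hs
    have hX1 := hsg a x1 h1
    have hX2 := hsg b x2 h2
    have hX3 := hsg c x3 h3
    have hX4 := hsg d x4 h4
    have hX5 := hsg e x5 h5
    have hs123 : s (TQ.br x1 x2 x3) ∈ TL.gr (a + b + c) :=
      hsg _ _ (TQ.grade a b c _ _ _ h1 h2 h3)
    have hs124 : s (TQ.br x1 x2 x4) ∈ TL.gr (a + b + d) :=
      hsg _ _ (TQ.grade a b d _ _ _ h1 h2 h4)
    have hB123 : TL.br (s x1) (s x2) (s x3) ∈ TL.gr (a + b + c) :=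
      TL.grade a b c _ _ _ hX1 hX2 hX3
    have hB124 : TL.br (s x1) (s x2) (s x4) ∈ TL.gr (a + b + d) :=
      TL.grade a b d _ _ _ hX1 hX2 hX4
    have lin3sub : ∀ u v X Y, TL.br u v (X - Y) = TL.br u v X - TL.br u v Y := by
      intro u v X Y
      exact (IsLinearMap.mk' _ (TL.lin₃ u v)).map_sub X Y
    have hfQs : s (TQ.br x1 x2 (TQ.br x3 x4 x5)) =
        s (TQ.br (TQ.br x1 x2 x3) x4 x5)
          + gsign k (c * (a + b)) • s (TQ.br x3 (TQ.br x1 x2 x4) x5)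
          + gsign k ((a + b) * (c + d)) • s (TQ.br x3 x4 (TQ.br x1 x2 x5)) := by
      rw [TQ.fund a b c d e x1 x2 x3 x4 x5 h1 h2 h3 h4 h5, map_add, map_add, map_smul, map_smul]
    apply E.i_inj
    simp only [map_add, map_sub, map_smul, hΦ, hOm, lin3sub]
    rw [TL.fund a b c d e (s x1) (s x2) (s x3) (s x4) (s x5) hX1 hX2 hX3 hX4 hX5]
    rw [TL.skew₁ (a + b + c) d (s (TQ.br x1 x2 x3)) (s x4) (s x5) hs123 hX4,
      TL.skew₂ (a + b + c) e (s x4) (s (TQ.br x1 x2 x3)) (s x5) hs123 hX5,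
      TL.skew₁ (a + b + c) d (TL.br (s x1) (s x2) (s x3)) (s x4) (s x5) hB123 hX4,
      TL.skew₂ (a + b + c) e (s x4) (TL.br (s x1) (s x2) (s x3)) (s x5) hB123 hX5,
      TL.skew₂ (a + b + d) e (s x3) (s (TQ.br x1 x2 x4)) (s x5) hs124 hX5,
      TL.skew₁ c e (s x3) (s x5) (s (TQ.br x1 x2 x4)) hX3 hX5,
      TL.skew₂ (a + b + d) e (s x3) (TL.br (s x1) (s x2) (s x4)) (s x5) hB124 hX5,
      TL.skew₁ c e (s x3) (s x5) (TL.br (s x1) (s x2) (s x4)) hX3 hX5,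
      hfQs]
    match_scalars <;>
      · clear hsec hsg hX1 hX2 hX3 hX4 hX5 hs123 hs124 hB123 hB124 lin3sub hfQs hΦ hOm h1 h2 h3 h4 h5
        fin_cases a <;> fin_cases b <;> fin_cases c <;> fin_cases d <;> fin_cases e <;>
          simp +decide [gsign, gsign_two_zmod]
end

section
/- Let $0\to\mathcal{P}\hookrightarrow\mathcal{L}\xrightarrow{\pi}\mathcal{Q}\to 0$ be an abelian extension of 3-Lie superalgebras with $[\mathcal{P},\mathcal{P},\mathcal{L}]=0$. If $\mathbb{H}^1(\mathcal{Q};\mathcal{P})=0$ (for the induced representation), then the extension splits: there exists a section $s':\mathcal{Q}\to\mathcal{L}$ of $\pi$ that is a 3-Lie superalgebra homomorphism. -/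
variable {k Pm Lm Qm G : Type*} [Field k] [AddCommGroup Pm] [Module k Pm]
  [AddCommGroup Lm] [Module k Lm] [AddCommGroup Qm] [Module k Qm]
  [AddCommGroup G] [Module k G]


/-- Every element of an internally graded (by `ZMod 2`) module decomposes. -/
private lemma decomp_two {k G : Type*} [Field k] [AddCommGroup G] [Module k G]
    (gr : ZMod 2 → Submodule k G) (h : DirectSum.IsInternal gr) (x : G) :
    ∃ x0 ∈ gr 0, ∃ x1 ∈ gr 1, x = x0 + x1 := by
  have htop := h.submodule_iSup_eq_top
  have hle : (⊤ : Submodule k G) ≤ gr 0 ⊔ gr 1 := by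
    rw [← htop]; refine iSup_le fun a => ?_; fin_cases a
    · exact le_sup_left
    · exact le_sup_right
  obtain ⟨x0, hx0, x1, hx1, hx⟩ := Submodule.mem_sup.mp (hle Submodule.mem_top)
  exact ⟨x0, hx0, x1, hx1, hx.symm⟩

private lemma mem_ne_zero {k G : Type*} [Field k] [AddCommGroup G] [Module k G]
    (gr : ZMod 2 → Submodule k G) (h : DirectSum.IsInternal gr) {a b : ZMod 2} (hab : a ≠ b)
    {x : G} (ha : x ∈ gr a) (hb : x ∈ gr b) : x = 0 := by
  have hind := h.submodule_iSupIndep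
  have h2 : x ∈ (⨆ j, ⨆ _ : j ≠ a, gr j : Submodule k G) :=
    Submodule.mem_iSup_of_mem b (Submodule.mem_iSup_of_mem (Ne.symm hab) hb)
  exact (Submodule.disjoint_def.mp (hind a)) x ha h2

set_option maxHeartbeats 3000000 in
/-- if `ℍ¹(Q; P) = 0` (every even 2-cocycle for the induced
representation is a coboundary of an even 1-cochain), then the extension splits. -/
theorem vanishing_H1_implies_split
    {TP : TLSA k Pm} {TL : TLSA k Lm} {TQ : TLSA k Qm}
    (E : AbExt TP TL TQ) (s : Qm →ₗ[k] Lm) (hs : IsSection E s)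
    (Φ : Qm → Qm → Pm → Pm)
    (hΦ : ∀ x y v, E.i (Φ x y v) = TL.br (s x) (s y) (E.i v))
    (hH1 : ∀ Om : Qm → Qm → Qm → Pm, Trilin3 k Om → Even3 TQ TP.gr Om →
      IsCocycle2 TQ Φ Om →
      ∃ ξ : Qm →ₗ[k] Pm, (∀ (a : ZMod 2) x, x ∈ TQ.gr a → ξ x ∈ TP.gr a) ∧
        IsDelta1 TQ Φ 0 ξ Om) :
    ∃ s' : Qm →ₗ[k] Lm, IsSection E s' ∧
      ∀ x y z, s' (TQ.br x y z) = TL.br (s' x) (s' y) (s' z) := by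
  classical
  haveI : Nonempty Pm := ⟨0⟩
  obtain ⟨hsec, hsgr⟩ := hs
  -- bilinearity helpers for the brackets
  have hbr_add₁ : ∀ u v y z, TL.br (u + v) y z = TL.br u y z + TL.br v y z :=
    fun u v y z => (TL.lin₁ y z).map_add u v
  have hbr_add₂ : ∀ x u v z, TL.br x (u + v) z = TL.br x u z + TL.br x v z :=
    fun x u v z => (TL.lin₂ x z).map_add u v
  have hbr_add₃ : ∀ x y u v, TL.br x y (u + v) = TL.br x y u + TL.br x y v :=
    fun x y u v => (TL.lin₃ x y).map_add u v
  have hbr_sub₁ : ∀ u v y z, TL.br (u - v) y z = TL.br u y z - TL.br v y z :=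
    fun u v y z => (TL.lin₁ y z).map_sub u v
  have hbr_sub₂ : ∀ x u v z, TL.br x (u - v) z = TL.br x u z - TL.br x v z :=
    fun x u v z => (TL.lin₂ x z).map_sub u v
  have hbr_sub₃ : ∀ x y u v, TL.br x y (u - v) = TL.br x y u - TL.br x y v :=
    fun x y u v => (TL.lin₃ x y).map_sub u v
  have hbr_smul₁ : ∀ (r : k) u y z, TL.br (r • u) y z = r • TL.br u y z :=
    fun r u y z => (TL.lin₁ y z).map_smul r u
  have hbr_smul₂ : ∀ (r : k) x u z, TL.br x (r • u) z = r • TL.br x u z :=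
    fun r x u z => (TL.lin₂ x z).map_smul r u
  have hbr_smul₃ : ∀ (r : k) x y u, TL.br x y (r • u) = r • TL.br x y u :=
    fun r x y u => (TL.lin₃ x y).map_smul r u
  have hq_add₁ : ∀ u v y z, TQ.br (u + v) y z = TQ.br u y z + TQ.br v y z :=
    fun u v y z => (TQ.lin₁ y z).map_add u v
  have hq_add₂ : ∀ x u v z, TQ.br x (u + v) z = TQ.br x u z + TQ.br x v z :=
    fun x u v z => (TQ.lin₂ x z).map_add u v
  have hq_add₃ : ∀ x y u v, TQ.br x y (u + v) = TQ.br x y u + TQ.br x y v :=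
    fun x y u v => (TQ.lin₃ x y).map_add u v
  have hq_smul₁ : ∀ (r : k) u y z, TQ.br (r • u) y z = r • TQ.br u y z :=
    fun r u y z => (TQ.lin₁ y z).map_smul r u
  have hq_smul₂ : ∀ (r : k) x u z, TQ.br x (r • u) z = r • TQ.br x u z :=
    fun r x u z => (TQ.lin₂ x z).map_smul r u
  have hq_smul₃ : ∀ (r : k) x y u, TQ.br x y (r • u) = r • TQ.br x y u :=
    fun r x y u => (TQ.lin₃ x y).map_smul r u
  -- the defect cochain Om
  have hinv : ∀ l : Lm, E.pr l = 0 → ∃ p, E.i p = l := by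
    intro l hl
    have : l ∈ LinearMap.range E.i := by rw [E.exact]; exact hl
    exact this
  set Om : Qm → Qm → Qm → Pm := fun x y z =>
    Function.invFun E.i (TL.br (s x) (s y) (s z) - s (TQ.br x y z)) with hOmdef
  have hiOm : ∀ x y z, E.i (Om x y z) = TL.br (s x) (s y) (s z) - s (TQ.br x y z) := by
    intro x y z
    refine Function.invFun_eq (hinv _ ?_)
    rw [map_sub, E.pr_hom.2.2, hsec, hsec, hsec, hsec, sub_self]
  have hB : ∀ x y z, TL.br (s x) (s y) (s z) = s (TQ.br x y z) + E.i (Om x y z) := by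
    intro x y z; rw [hiOm]; abel
  -- graded injectivity transfer from L to P
  have hPgr : ∀ (d : ZMod 2) (p : Pm), E.i p ∈ TL.gr d → p ∈ TP.gr d := by
    intro d p hp
    obtain ⟨p0, hp0, p1, hp1, rfl⟩ := decomp_two TP.gr TP.decomp p
    have h0 : E.i p0 ∈ TL.gr 0 := E.i_hom.2.1 0 p0 hp0
    have h1 : E.i p1 ∈ TL.gr 1 := E.i_hom.2.1 1 p1 hp1
    have hsub0 : E.i p1 = E.i (p0 + p1) - E.i p0 := by rw [map_add]; abel
    have hsub1 : E.i p0 = E.i (p0 + p1) - E.i p1 := by rw [map_add]; abel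
    fin_cases d
    · have hz : E.i p1 = 0 := by
        refine mem_ne_zero TL.gr TL.decomp (show (1 : ZMod 2) ≠ 0 by decide) h1 ?_
        rw [hsub0]; exact Submodule.sub_mem _ hp h0
      have : p1 = 0 := E.i_inj (by rw [hz, map_zero])
      rw [this, add_zero]; exact hp0
    · have hz : E.i p0 = 0 := by
        refine mem_ne_zero TL.gr TL.decomp (show (0 : ZMod 2) ≠ 1 by decide) h0 ?_
        rw [hsub1]; exact Submodule.sub_mem _ hp h1
      have : p0 = 0 := E.i_inj (by rw [hz, map_zero])
      rw [this, zero_add]; exact hp1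
  -- Om is trilinear
  have hOmlin : Trilin3 k Om := by
    refine ⟨fun y z => ⟨?_, ?_⟩, fun x z => ⟨?_, ?_⟩, fun x y => ⟨?_, ?_⟩⟩ <;>
      intro u v <;> apply E.i_inj <;>
      simp only [map_add, map_smul, hiOm, hq_add₁, hq_add₂, hq_add₃, hq_smul₁, hq_smul₂,
        hq_smul₃, hbr_add₁, hbr_add₂, hbr_add₃, hbr_smul₁, hbr_smul₂, hbr_smul₃,
        smul_sub] <;> abel
  -- Om is even
  have hOmgr : Even3 TQ TP.gr Om := by
    intro a b c x y z hx hy hz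
    refine hPgr (a + b + c) _ ?_
    rw [hiOm]
    exact Submodule.sub_mem _
      (TL.grade a b c _ _ _ (hsgr a x hx) (hsgr b y hy) (hsgr c z hz))
      (hsgr _ _ (TQ.grade a b c _ _ _ hx hy hz))
  -- moving an i-term through the bracket
  have mv1 : ∀ (g bb cc : ZMod 2) (p : Pm) (y z : Qm), p ∈ TP.gr g → y ∈ TQ.gr bb →
      z ∈ TQ.gr cc → TL.br (E.i p) (s y) (s z)
        = (-gsign k (g * bb)) • ((-gsign k (g * cc)) • E.i (Φ y z p)) := by
    intro g bb cc p y z hp hy hz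
    rw [TL.skew₁ g bb _ _ _ (E.i_hom.2.1 g p hp) (hsgr bb y hy),
      TL.skew₂ g cc _ _ _ (E.i_hom.2.1 g p hp) (hsgr cc z hz), ← hΦ]
  have mv2 : ∀ (g bb cc : ZMod 2) (p : Pm) (y z : Qm), p ∈ TP.gr g → y ∈ TQ.gr bb →
      z ∈ TQ.gr cc → TL.br (s y) (E.i p) (s z)
        = (-gsign k (g * cc)) • ((-gsign k (bb * cc)) • E.i (Φ z y p)) := by
    intro g bb cc p y z hp hy hz
    rw [TL.skew₂ g cc _ _ _ (E.i_hom.2.1 g p hp) (hsgr cc z hz),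
      TL.skew₁ bb cc _ _ _ (hsgr bb y hy) (hsgr cc z hz), ← hΦ]
  -- Om is a 2-cocycle
  have hOmcoc : IsCocycle2 TQ Φ Om := by
    intro a b c d e x1 x2 x3 x4 x5 h1 h2 h3 h4 h5
    apply E.i_inj
    have hF := TL.fund a b c d e (s x1) (s x2) (s x3) (s x4) (s x5)
      (hsgr a x1 h1) (hsgr b x2 h2) (hsgr c x3 h3) (hsgr d x4 h4) (hsgr e x5 h5)
    have hQs : s (TQ.br x1 x2 (TQ.br x3 x4 x5))
        = s (TQ.br (TQ.br x1 x2 x3) x4 x5)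
          + gsign k (c * (a + b)) • s (TQ.br x3 (TQ.br x1 x2 x4) x5)
          + gsign k ((a + b) * (c + d)) • s (TQ.br x3 x4 (TQ.br x1 x2 x5)) := by
      rw [TQ.fund a b c d e x1 x2 x3 x4 x5 h1 h2 h3 h4 h5, map_add, map_add, map_smul,
        map_smul]
    simp only [map_add, map_sub, map_smul, hΦ, hiOm, hbr_sub₃]
    rw [hF, hB x1 x2 x3, hB x1 x2 x4, hB x1 x2 x5]
    simp only [hbr_add₁, hbr_add₂, hbr_add₃]
    rw [mv1 (a + b + c) d e (Om x1 x2 x3) x4 x5 (hOmgr a b c x1 x2 x3 h1 h2 h3) h4 h5,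
      mv2 (a + b + d) c e (Om x1 x2 x4) x3 x5 (hOmgr a b d x1 x2 x4 h1 h2 h4) h3 h5,
      ← hΦ x3 x4 (Om x1 x2 x5), ← hΦ x4 x5 (Om x1 x2 x3), ← hΦ x5 x3 (Om x1 x2 x4), hQs]
    match_scalars <;>
      (fin_cases a <;> fin_cases b <;> fin_cases c <;> fin_cases d <;> fin_cases e <;>
        simp +decide [gsign])
  -- use vanishing cohomology
  obtain ⟨ξ, hξgr, hδ⟩ := hH1 Om hOmlin hOmgr hOmcoc
  refine ⟨s - E.i ∘ₗ ξ, ⟨?_, ?_⟩, ?_⟩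
  · intro x
    have hmem : E.i (ξ x) ∈ LinearMap.ker E.pr := by
      rw [← E.exact]; exact LinearMap.mem_range_self _ _
    simp only [LinearMap.sub_apply, LinearMap.comp_apply, map_sub, hsec]
    rw [LinearMap.mem_ker.mp hmem, sub_zero]
  · intro a x hx
    simp only [LinearMap.sub_apply, LinearMap.comp_apply]
    exact Submodule.sub_mem _ (hsgr a x hx) (E.i_hom.2.1 a _ (hξgr a x hx))
  · -- homogeneous case first
    have key : ∀ (a b c : ZMod 2) (x y z : Qm), x ∈ TQ.gr a → y ∈ TQ.gr b → z ∈ TQ.gr c →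
        (s - E.i ∘ₗ ξ) (TQ.br x y z)
          = TL.br ((s - E.i ∘ₗ ξ) x) ((s - E.i ∘ₗ ξ) y) ((s - E.i ∘ₗ ξ) z) := by
      intro a b c x y z hx hy hz
      have hδ' := hδ a b c x y z hx hy hz
      have hEOm := congrArg E.i hδ'
      simp only [map_add, map_neg, map_smul] at hEOm
      have hz12 : TL.br (E.i (ξ x)) (E.i (ξ y)) (s z) = 0 := E.abelian _ _ _
      have hz123 : TL.br (E.i (ξ x)) (E.i (ξ y)) (E.i (ξ z)) = 0 := E.abelian _ _ _
      have hz13 : TL.br (E.i (ξ x)) (s y) (E.i (ξ z)) = 0 := by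
        rw [TL.skew₂ b c _ _ _ (hsgr b y hy) (E.i_hom.2.1 c _ (hξgr c z hz))]
        simp [E.abelian]
      have hz23 : TL.br (s x) (E.i (ξ y)) (E.i (ξ z)) = 0 := by
        rw [TL.skew₁ a b _ _ _ (hsgr a x hx) (E.i_hom.2.1 b _ (hξgr b y hy)),
          TL.skew₂ a c _ _ _ (hsgr a x hx) (E.i_hom.2.1 c _ (hξgr c z hz))]
        simp [E.abelian]
      simp only [LinearMap.sub_apply, LinearMap.comp_apply, map_sub]
      rw [hbr_sub₁]
      simp only [hbr_sub₂, hbr_sub₃]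
      rw [hz12, hz123, hz13, hz23,
        mv1 a b c (ξ x) y z (hξgr a x hx) hy hz,
        mv2 b a c (ξ y) x z (hξgr b y hy) hx hz,
        ← hΦ x y (ξ z), hB x y z, hEOm]
      match_scalars <;>
        (fin_cases a <;> fin_cases b <;> fin_cases c <;> simp +decide [gsign])
    intro x y z
    obtain ⟨x0, hx0, x1, hx1, rfl⟩ := decomp_two TQ.gr TQ.decomp x
    obtain ⟨y0, hy0, y1, hy1, rfl⟩ := decomp_two TQ.gr TQ.decomp y
    obtain ⟨z0, hz0, z1, hz1, rfl⟩ := decomp_two TQ.gr TQ.decomp z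
    simp only [hq_add₁, hq_add₂, hq_add₃, map_add, hbr_add₁, hbr_add₂, hbr_add₃]
    rw [key 0 0 0 x0 y0 z0 hx0 hy0 hz0, key 0 0 1 x0 y0 z1 hx0 hy0 hz1,
      key 0 1 0 x0 y1 z0 hx0 hy1 hz0, key 0 1 1 x0 y1 z1 hx0 hy1 hz1,
      key 1 0 0 x1 y0 z0 hx1 hy0 hz0, key 1 0 1 x1 y0 z1 hx1 hy0 hz1,
      key 1 1 0 x1 y1 z0 hx1 hy1 hz0, key 1 1 1 x1 y1 z1 hx1 hy1 hz1]
end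

section
/- Let $(\Phi,\mathcal{P})$ be a representation of a 3-Lie superalgebra $\mathcal{Q}$, $(\mathcal{D}_p,\mathcal{D}_q)$ a compatible pair of superderivations of degree $\alpha$, and $\lambda:\mathcal{Q}\to\mathcal{P}$ an even linear map. Then applying the operator $Ob_{(\mathcal{D}_p,\mathcal{D}_q)}$ to the 2-coboundary $\delta_{\Phi}\lambda$ yields the 2-coboundary of $\mathcal{D}_p\circ\lambda - \lambda\circ\mathcal{D}_q$; that is, $Ob^{\delta_{\Phi}\lambda}_{(\mathcal{D}_p,\mathcal{D}_q)} = \delta_{\Phi}(\mathcal{D}_p\lambda-\lambda\mathcal{D}_q)$. Consequently the assignment $[\Omega]\mapsto[Ob^{\Omega}_{(\mathcal{D}_p,\mathcal{D}_q)}]$ gives a well-defined map $\Psi(\mathcal{D}_p,\mathcal{D}_q)$ on $\mathbb{H}^1(\mathcal{Q};\mathcal{P})$. -/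
variable {k Pm Lm Qm G : Type*} [Field k] [AddCommGroup Pm] [Module k Pm]
  [AddCommGroup Lm] [Module k Lm] [AddCommGroup Qm] [Module k Qm]
  [AddCommGroup G] [Module k G]

set_option maxHeartbeats 2000000 in
/-- the obstruction operator maps the coboundary `δ_Φ λ` to the
coboundary of `Dp∘λ - λ∘Dq`; hence `Ψ(Dp,Dq)` is well defined on `ℍ¹(Q;P)`. -/
theorem obstruction_of_coboundary
    (TQ : TLSA k Qm) (Pgr : ZMod 2 → Submodule k Pm)
    (Φ : Qm → Qm → Pm → Pm) (hΦ : IsTLSARep TQ Pgr Φ) (α : ZMod 2)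
    (Dp : Pm →ₗ[k] Pm) (hDp : ∀ (a : ZMod 2) v, v ∈ Pgr a → Dp v ∈ Pgr (a + α))
    (Dq : Qm →ₗ[k] Qm) (hDq : IsSDer TQ α Dq)
    (hcomp : Compatible TQ Pgr Φ α Dp Dq)
    (lam : Qm →ₗ[k] Pm) (hlame : ∀ (a : ZMod 2) x, x ∈ TQ.gr a → lam x ∈ Pgr a)
    (Om : Qm → Qm → Qm → Pm) (hOm : IsDelta1 TQ Φ 0 lam Om)
    (Ob : Qm → Qm → Qm → Pm) (hOb : IsOb TQ α Dp Dq Om Ob) :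
    IsDelta1 TQ Φ α (fun x => Dp (lam x) - lam (Dq x)) Ob := by
  intro a b c x y z hx hy hz
  have hx' := hDq.1 a x hx
  have hy' := hDq.1 b y hy
  have hz' := hDq.1 c z hz
  have hc1 := hcomp a b x y hx hy (lam z)
  have hc2 := hcomp b c y z hy hz (lam x)
  have hc3 := hcomp c a z x hz hx (lam y)
  have e1 := sub_eq_iff_eq_add.mp hc1
  have e2 := sub_eq_iff_eq_add.mp hc2
  have e3 := sub_eq_iff_eq_add.mp hc3
  have hsub1 : ∀ (u v : Pm), Φ x y (u - v) = Φ x y u - Φ x y v := fun u v =>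
    (IsLinearMap.mk' _ (hΦ.2.2.1 x y)).map_sub u v
  have hsub2 : ∀ (u v : Pm), Φ y z (u - v) = Φ y z u - Φ y z v := fun u v =>
    (IsLinearMap.mk' _ (hΦ.2.2.1 y z)).map_sub u v
  have hsub3 : ∀ (u v : Pm), Φ z x (u - v) = Φ z x u - Φ z x v := fun u v =>
    (IsLinearMap.mk' _ (hΦ.2.2.1 z x)).map_sub u v
  rw [hOb a b c x y z hx hy hz, hOm a b c x y z hx hy hz,
    hOm (a + α) b c _ y z hx' hy hz,
    hOm a (b + α) c x _ z hx hy' hz,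
    hOm a b (c + α) x y _ hx hy hz']
  beta_reduce
  rw [hDq.2 a b c x y z hx hy hz]
  simp only [map_add, map_neg, map_smul, hsub1, hsub2, hsub3, e1, e2, e3]
  have key : ∀ t : ZMod 2, t = 0 ∨ t = 1 := by decide
  rcases key a with h | h <;> subst h <;>
    rcases key b with h | h <;> subst h <;>
      rcases key c with h | h <;> subst h <;>
        rcases key α with h | h <;> subst h <;>
          · simp (config := { decide := true }) only [gsign]
            norm_num
            abel
end

section
/- Let $0\to\mathcal{P}\hookrightarrow\mathcal{L}\xrightarrow{\pi}\mathcal{Q}\to 0$ be an abelian extension of 3-Lie superalgebras with $[\mathcal{P},\mathcal{P},\mathcal{L}]=0$, with induced representation $\Phi(x,y)(v)=[s(x),s(y),v]_{\mathcal{L}}$. If a pair $(\mathcal{D}_p,\mathcal{D}_q)\in\mathrm{Der}(\mathcal{P})\times\mathrm{Der}(\mathcal{Q})$ of degree $\alpha$ is extensible (i.e. there exists $\mathcal{D}_l\in\mathrm{Der}(\mathcal{L})$ with $\mathcal{D}_l|_{\mathcal{P}}=\mathcal{D}_p$ and $\pi\circ\mathcal{D}_l=\mathcal{D}_q\circ\pi$),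 then $(\mathcal{D}_p,\mathcal{D}_q)$ is compatible with respect to $\Phi$: $\mathcal{D}_p\Phi(x,y)-(-1)^{\alpha(|x|+|y|)}\Phi(x,y)\mathcal{D}_p=\Phi(\mathcal{D}_q x,y)+(-1)^{\alpha|x|}\Phi(x,\mathcal{D}_q y)$. -/
variable {k Pm Lm Qm G : Type*} [Field k] [AddCommGroup Pm] [Module k Pm]
  [AddCommGroup Lm] [Module k Lm] [AddCommGroup Qm] [Module k Qm]
  [AddCommGroup G] [Module k G]

/-- if the pair `(Dp, Dq)` of degree `α` is extensible to a
superderivation `Dl` of `L`, then it is compatible with the induced representation. -/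
theorem extensible_implies_compatible
    {TP : TLSA k Pm} {TL : TLSA k Lm} {TQ : TLSA k Qm}
    (E : AbExt TP TL TQ) (s : Qm →ₗ[k] Lm) (hs : IsSection E s)
    (Φ : Qm → Qm → Pm → Pm)
    (hΦ : ∀ x y v, E.i (Φ x y v) = TL.br (s x) (s y) (E.i v)) (α : ZMod 2)
    (Dp : Pm →ₗ[k] Pm) (Dq : Qm →ₗ[k] Qm) (Dl : Lm →ₗ[k] Lm)
    (hDp : IsSDer TP α Dp) (hDq : IsSDer TQ α Dq) (hDl : IsSDer TL α Dl)
    (hrestrict : ∀ v, Dl (E.i v) = E.i (Dp v))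
    (hproj : ∀ l, E.pr (Dl l) = Dq (E.pr l)) :
    Compatible TQ TP.gr Φ α Dp Dq := by
  intro a b x y hx hy v
  have hsx : s x ∈ TL.gr a := hs.2 a x hx
  have hsy : s y ∈ TL.gr b := hs.2 b y hy
  -- Φ is additive / zero in the last argument
  have hΦadd : ∀ x y (v w : Pm), Φ x y (v + w) = Φ x y v + Φ x y w := by
    intro x y v w
    apply E.i_inj
    rw [map_add, hΦ, hΦ, hΦ, map_add, (TL.lin₃ (s x) (s y)).map_add]
  have hΦzero : ∀ x y, Φ x y (0 : Pm) = 0 := by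
    intro x y
    apply E.i_inj
    rw [map_zero, hΦ, map_zero, (TL.lin₃ (s x) (s y)).map_zero]
  -- decompose Dl (s x), Dl (s y)
  obtain ⟨ux, hux⟩ : Dl (s x) - s (Dq x) ∈ LinearMap.range E.i := by
    rw [E.exact, LinearMap.mem_ker, map_sub, hproj, hs.1, hs.1, sub_self]
  obtain ⟨uy, huy⟩ : Dl (s y) - s (Dq y) ∈ LinearMap.range E.i := by
    rw [E.exact, LinearMap.mem_ker, map_sub, hproj, hs.1, hs.1, sub_self]
  have hDlsx : Dl (s x) = E.i ux + s (Dq x) := by rw [hux]; abel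
  have hDlsy : Dl (s y) = E.i uy + s (Dq y) := by rw [huy]; abel
  have huym : E.i uy ∈ TL.gr (b + α) := by
    rw [huy]
    exact sub_mem (hDl.1 b _ hsy) (hs.2 _ _ (hDq.1 b y hy))
  -- the key identity, first for homogeneous w, then for all w
  have key : ∀ w : Pm, Dp (Φ x y w) = Φ (Dq x) y w + gsign k (α * a) • Φ x (Dq y) w
      + gsign k (α * (a + b)) • Φ x y (Dp w) := by
    intro w
    have hw : w ∈ ⨆ c, TP.gr c := by
      rw [TP.decomp.submodule_iSup_eq_top]; trivial
    refine Submodule.iSup_induction (x := w) TP.gr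
      (motive := fun w => Dp (Φ x y w) = Φ (Dq x) y w + gsign k (α * a) • Φ x (Dq y) w
        + gsign k (α * (a + b)) • Φ x y (Dp w)) hw
      (fun c w hwc => ?_) ?_ (fun w1 w2 h1 h2 => ?_)
    ·
      have hiw : E.i w ∈ TL.gr c := E.i_hom.2.1 c w hwc
      apply E.i_inj
      rw [← hrestrict, hΦ, hDl.2 a b c (s x) (s y) (E.i w) hsx hsy hiw,
        hDlsx, hDlsy, hrestrict]
      have h1 : TL.br (E.i ux) (s y) (E.i w) = 0 := by
        rw [TL.skew₂ b c (E.i ux) (s y) (E.i w) hsy hiw, E.abelian]; simp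
      have h2 : TL.br (s x) (E.i uy) (E.i w) = 0 := by
        rw [TL.skew₁ a (b + α) (s x) (E.i uy) (E.i w) hsx huym,
          TL.skew₂ a c (E.i uy) (s x) (E.i w) hsx hiw, E.abelian]; simp
      rw [(TL.lin₁ (s y) (E.i w)).map_add, h1, (TL.lin₂ (s x) (E.i w)).map_add, h2]
      rw [map_add, map_add, map_smul, map_smul, hΦ, hΦ, hΦ]
      simp only [zero_add]
    · simp [hΦzero]
    · rw [hΦadd, map_add, h1, h2]
      simp only [map_add, hΦadd, smul_add]
      abel
  rw [key v]
  abel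
end

section
/- Let $0\to\mathcal{P}\hookrightarrow\mathcal{L}\xrightarrow{\pi}\mathcal{Q}\to 0$ be an abelian extension of 3-Lie superalgebras with $[\mathcal{P},\mathcal{P},\mathcal{L}]=0$ and let $(\mathcal{D}_p,\mathcal{D}_q)$ be a compatible pair of superderivations of degree $\alpha$. If $s_1,s_2$ are two even sections of $\pi$ with associated 2-cocycles $\Omega_1,\Omega_2$ and obstruction cochains $Ob^{\Omega_1}_{(\mathcal{D}_p,\mathcal{D}_q)}, Ob^{\Omega_2}_{(\mathcal{D}_p,\mathcal{D}_q)}$, then $Ob^{\Omega_1}_{(\mathcal{D}_p,\mathcal{D}_q)}-Ob^{\Omega_2}_{(\mathcal{D}_p,\mathcal{D}_q)}=\delta_{\Phi}(\mathcal{D}_p\lambda-\lambda\mathcal{D}_q)$ where $\lambda=s_1-s_2$; hence the obstruction class $[Ob^{\Omega}_{(\mathcal{D}_p,\mathcal{D}_q)}]\in\mathbb{H}^1(\mathcal{Q};\mathcal{P})$ does not depend on the choice of section. -/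
variable {k Pm Lm Qm G : Type*} [Field k] [AddCommGroup Pm] [Module k Pm]
  [AddCommGroup Lm] [Module k Lm] [AddCommGroup Qm] [Module k Qm]
  [AddCommGroup G] [Module k G]


/-! ### Auxiliary lemmas -/

private lemma zmod2_cases' : ∀ a : ZMod 2, a = 0 ∨ a = 1 := by decide

private lemma gsign_add' (k : Type*) [Field k] (a b : ZMod 2) :
    gsign k (a + b) = gsign k a * gsign k b := by
  rcases zmod2_cases' a with h | h <;> rcases zmod2_cases' b with h2 | h2 <;> subst h <;>
    subst h2 <;> simp [gsign, show (1 + 1 : ZMod 2) = 0 by decide]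

section AuxZero
variable {k Pm Lm : Type*} [Field k] [AddCommGroup Pm] [Module k Pm]
  [AddCommGroup Lm] [Module k Lm]

private theorem br_zero₁' {TP : TLSA k Pm} (TL : TLSA k Lm) (i : Pm →ₗ[k] Lm)
    (hgr : ∀ (a : ZMod 2) x, x ∈ TP.gr a → i x ∈ TL.gr a)
    (hab : ∀ u v l, TL.br (i u) (i v) l = 0)
    (u v : Pm) (l : Lm) : TL.br (i u) l (i v) = 0 := by
  have homog : ∀ (c b : ZMod 2) (l : Lm) (v : Pm), l ∈ TL.gr c → v ∈ TP.gr b →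
      TL.br (i u) l (i v) = 0 := by
    intro c b l v hl hv
    rw [TL.skew₂ c b _ _ _ hl (hgr b v hv), hab, smul_zero]
  have step2 : ∀ (c : ZMod 2) (l : Lm), l ∈ TL.gr c → ∀ v, TL.br (i u) l (i v) = 0 := by
    intro c l hl v
    have hv : v ∈ ⨆ b, TP.gr b := by rw [TP.decomp.submodule_iSup_eq_top]; trivial
    refine Submodule.iSup_induction (motive := fun v => TL.br (i u) l (i v) = 0) _ hv
      (fun b w hw => homog c b l w hl hw) ?_ ?_
    · show TL.br (i u) l (i 0) = 0
      rw [map_zero]; exact (TL.lin₃ _ _).map_zero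
    · intro w1 w2 h1 h2
      show TL.br (i u) l (i (w1 + w2)) = 0
      rw [map_add, (TL.lin₃ _ _).map_add, h1, h2, add_zero]
  have hltop : l ∈ ⨆ c, TL.gr c := by rw [TL.decomp.submodule_iSup_eq_top]; trivial
  refine Submodule.iSup_induction (motive := fun l => TL.br (i u) l (i v) = 0) _ hltop
    (fun c m hm => step2 c m hm v) ?_ ?_
  · exact (TL.lin₂ _ _).map_zero
  · intro m1 m2 h1 h2
    show TL.br (i u) (m1 + m2) (i v) = 0
    rw [(TL.lin₂ _ _).map_add, h1, h2, add_zero]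

private theorem br_zero₂' {TP : TLSA k Pm} (TL : TLSA k Lm) (i : Pm →ₗ[k] Lm)
    (hgr : ∀ (a : ZMod 2) x, x ∈ TP.gr a → i x ∈ TL.gr a)
    (hab : ∀ u v l, TL.br (i u) (i v) l = 0)
    (u v : Pm) (l : Lm) : TL.br l (i u) (i v) = 0 := by
  have homog : ∀ (c a : ZMod 2) (l : Lm) (u : Pm), l ∈ TL.gr c → u ∈ TP.gr a →
      TL.br l (i u) (i v) = 0 := by
    intro c a l u hl hu
    rw [TL.skew₁ c a _ _ _ hl (hgr a u hu), br_zero₁' TL i hgr hab, smul_zero]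
  have step2 : ∀ (c : ZMod 2) (l : Lm), l ∈ TL.gr c → ∀ u, TL.br l (i u) (i v) = 0 := by
    intro c l hl u
    have hu : u ∈ ⨆ a, TP.gr a := by rw [TP.decomp.submodule_iSup_eq_top]; trivial
    refine Submodule.iSup_induction (motive := fun u => TL.br l (i u) (i v) = 0) _ hu
      (fun a w hw => homog c a l w hl hw) ?_ ?_
    · show TL.br l (i 0) (i v) = 0
      rw [map_zero]; exact (TL.lin₂ _ _).map_zero
    · intro w1 w2 h1 h2
      show TL.br l (i (w1 + w2)) (i v) = 0
      rw [map_add, (TL.lin₂ _ _).map_add, h1, h2, add_zero]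
  have hltop : l ∈ ⨆ c, TL.gr c := by rw [TL.decomp.submodule_iSup_eq_top]; trivial
  refine Submodule.iSup_induction (motive := fun l => TL.br l (i u) (i v) = 0) _ hltop
    (fun c m hm => step2 c m hm u) ?_ ?_
  · exact (TL.lin₁ _ _).map_zero
  · intro m1 m2 h1 h2
    show TL.br (m1 + m2) (i u) (i v) = 0
    rw [(TL.lin₁ _ _).map_add, h1, h2, add_zero]

end AuxZero

/-- the obstruction cochains built from two sections differ by the
coboundary `δ_Φ(Dp∘λ - λ∘Dq)` with `λ = s₁ - s₂`; so `[Ob^Ω_{(Dp,Dq)}]` is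
independent of the section. -/
theorem obstruction_class_independent_of_section
    {TP : TLSA k Pm} {TL : TLSA k Lm} {TQ : TLSA k Qm}
    (E : AbExt TP TL TQ) (s1 s2 : Qm →ₗ[k] Lm)
    (hs1 : IsSection E s1) (hs2 : IsSection E s2)
    (Φ : Qm → Qm → Pm → Pm)
    (hΦ : ∀ x y v, E.i (Φ x y v) = TL.br (s1 x) (s1 y) (E.i v)) (α : ZMod 2)
    (Dp : Pm →ₗ[k] Pm) (hDp : IsSDer TP α Dp)
    (Dq : Qm →ₗ[k] Qm) (hDq : IsSDer TQ α Dq)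
    (hcomp : Compatible TQ TP.gr Φ α Dp Dq)
    (Om1 Om2 : Qm → Qm → Qm → Pm)
    (hOm1 : ∀ x y z, E.i (Om1 x y z) = TL.br (s1 x) (s1 y) (s1 z) - s1 (TQ.br x y z))
    (hOm2 : ∀ x y z, E.i (Om2 x y z) = TL.br (s2 x) (s2 y) (s2 z) - s2 (TQ.br x y z))
    (Ob1 Ob2 : Qm → Qm → Qm → Pm)
    (hOb1 : IsOb TQ α Dp Dq Om1 Ob1) (hOb2 : IsOb TQ α Dp Dq Om2 Ob2)
    (lam : Qm →ₗ[k] Pm) (hlam : ∀ x, E.i (lam x) = s1 x - s2 x) :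
    IsDelta1 TQ Φ α (fun x => Dp (lam x) - lam (Dq x))
      (fun x y z => Ob1 x y z - Ob2 x y z) := by
  intro a b c x y z hx hy hz
  simp only []
  have hzero1 := br_zero₁' TL E.i E.i_hom.2.1 E.abelian
  have hzero2 := br_zero₂' TL E.i E.i_hom.2.1 E.abelian
  -- the difference of the two 2-cocycles
  have hΔ : ∀ (a b c : ZMod 2) (x y z : Qm), x ∈ TQ.gr a → y ∈ TQ.gr b → z ∈ TQ.gr c →
      Om1 x y z = Om2 x y z + (gsign k (a*(b+c)) • Φ y z (lam x)
        - gsign k (b*c) • Φ x z (lam y) + Φ x y (lam z) - lam (TQ.br x y z)) := by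
    intro a b c x y z hx hy hz
    apply E.i_inj
    have mx : E.i (lam x) ∈ TL.gr a := by
      rw [hlam]; exact sub_mem (hs1.2 a x hx) (hs2.2 a x hx)
    have my : E.i (lam y) ∈ TL.gr b := by
      rw [hlam]; exact sub_mem (hs1.2 b y hy) (hs2.2 b y hy)
    have E1 : TL.br (s1 x) (s1 y) (s1 z) - TL.br (s2 x) (s1 y) (s1 z)
        = TL.br (E.i (lam x)) (s1 y) (s1 z) := by
      rw [hlam]; exact ((TL.lin₁ (s1 y) (s1 z)).map_sub _ _).symm
    have E2 : TL.br (s2 x) (s1 y) (s1 z) - TL.br (s2 x) (s2 y) (s1 z)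
        = TL.br (s2 x) (E.i (lam y)) (s1 z) := by
      rw [hlam]; exact ((TL.lin₂ (s2 x) (s1 z)).map_sub _ _).symm
    have E3 : TL.br (s2 x) (s2 y) (s1 z) - TL.br (s2 x) (s2 y) (s2 z)
        = TL.br (s2 x) (s2 y) (E.i (lam z)) := by
      rw [hlam]; exact ((TL.lin₃ (s2 x) (s2 y)).map_sub _ _).symm
    have K1 : TL.br (E.i (lam x)) (s1 y) (s1 z)
        = gsign k (a*(b+c)) • TL.br (s1 y) (s1 z) (E.i (lam x)) := by
      rw [TL.skew₁ a b _ _ _ mx (hs1.2 b y hy),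
        TL.skew₂ a c _ _ _ mx (hs1.2 c z hz), smul_smul, neg_mul_neg,
        ← gsign_add', ← mul_add]
    have K2 : TL.br (s2 x) (E.i (lam y)) (s1 z)
        = - (gsign k (b*c) • TL.br (s1 x) (s1 z) (E.i (lam y))) := by
      have h : TL.br (s1 x) (s1 z) (E.i (lam y)) = TL.br (s2 x) (s1 z) (E.i (lam y)) := by
        have h0 : TL.br (E.i (lam x)) (s1 z) (E.i (lam y)) = 0 := hzero1 _ _ _
        rw [hlam, (TL.lin₁ _ _).map_sub] at h0
        exact sub_eq_zero.mp h0
      rw [TL.skew₂ b c _ _ _ my (hs1.2 c z hz), h, neg_smul]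
    have K3 : TL.br (s2 x) (s2 y) (E.i (lam z))
        = TL.br (s1 x) (s1 y) (E.i (lam z)) := by
      have h1 : TL.br (s1 x) (s1 y) (E.i (lam z)) = TL.br (s2 x) (s1 y) (E.i (lam z)) := by
        have h0 : TL.br (E.i (lam x)) (s1 y) (E.i (lam z)) = 0 := hzero1 _ _ _
        rw [hlam, (TL.lin₁ _ _).map_sub] at h0
        exact sub_eq_zero.mp h0
      have h2 : TL.br (s2 x) (s1 y) (E.i (lam z)) = TL.br (s2 x) (s2 y) (E.i (lam z)) := by
        have h0 : TL.br (s2 x) (E.i (lam y)) (E.i (lam z)) = 0 := hzero2 _ _ _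
        rw [hlam, (TL.lin₂ _ _).map_sub] at h0
        exact sub_eq_zero.mp h0
      exact (h1.trans h2).symm
    simp only [map_add, map_sub, map_smul, hOm1, hOm2, hΦ]
    rw [hlam (TQ.br x y z)]
    linear_combination (norm := module) E1 + E2 + E3 + K1 + K2 + K3
  -- memberships after applying Dq
  have hx' : Dq x ∈ TQ.gr (a + α) := hDq.1 a x hx
  have hy' : Dq y ∈ TQ.gr (b + α) := hDq.1 b y hy
  have hz' : Dq z ∈ TQ.gr (c + α) := hDq.1 c z hz
  -- instantiations of the cocycle-difference formula
  have e0 := hΔ a b c x y z hx hy hz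
  have e1 := hΔ (a + α) b c (Dq x) y z hx' hy hz
  have e2 := hΔ a (b + α) c x (Dq y) z hx hy' hz
  have e3 := hΔ a b (c + α) x y (Dq z) hx hy hz'
  -- compatibility, rearranged
  have c1 : Dp (Φ y z (lam x)) = gsign k (α*(b+c)) • Φ y z (Dp (lam x))
      + Φ (Dq y) z (lam x) + gsign k (α*b) • Φ y (Dq z) (lam x) := by
    have h := hcomp b c y z hy hz (lam x)
    linear_combination (norm := module) h
  have c2 : Dp (Φ x z (lam y)) = gsign k (α*(a+c)) • Φ x z (Dp (lam y))
      + Φ (Dq x) z (lam y) + gsign k (α*a) • Φ x (Dq z) (lam y) := by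
    have h := hcomp a c x z hx hz (lam y)
    linear_combination (norm := module) h
  have c3 : Dp (Φ x y (lam z)) = gsign k (α*(a+b)) • Φ x y (Dp (lam z))
      + Φ (Dq x) y (lam z) + gsign k (α*a) • Φ x (Dq y) (lam z) := by
    have h := hcomp a b x y hx hy (lam z)
    linear_combination (norm := module) h
  -- Φ is additive in the last argument
  have hPhiSub : ∀ x y u v, Φ x y (u - v) = Φ x y u - Φ x y v := by
    intro x y u v
    apply E.i_inj
    simp only [map_sub, hΦ]
    exact (TL.lin₃ _ _).map_sub _ _
  -- skew-symmetry of Φ in the first two arguments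
  have hsk : ∀ v, Φ z x v = - gsign k (c*a) • Φ x z v := by
    intro v
    apply E.i_inj
    simp only [map_smul, map_neg, hΦ, neg_smul]
    rw [TL.skew₁ c a _ _ _ (hs1.2 c z hz) (hs1.2 a x hx), neg_smul]
  -- derivation property through lam
  have hder : lam (Dq (TQ.br x y z)) = lam (TQ.br (Dq x) y z)
      + gsign k (α*a) • lam (TQ.br x (Dq y) z)
      + gsign k (α*(a+b)) • lam (TQ.br x y (Dq z)) := by
    rw [hDq.2 a b c x y z hx hy hz, map_add, map_add, map_smul, map_smul]
  rw [hOb1 a b c x y z hx hy hz, hOb2 a b c x y z hx hy hz, e0, e1, e2, e3]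
  simp only [map_add, map_sub, map_smul, hPhiSub, hsk, hder, c1, c2, c3]
  rcases zmod2_cases' a with rfl | rfl <;> rcases zmod2_cases' b with rfl | rfl <;>
    rcases zmod2_cases' c with rfl | rfl <;> rcases zmod2_cases' α with rfl | rfl <;>
    simp only [gsign, show (1 + 1 : ZMod 2) = 0 by decide, zero_add, add_zero, mul_zero,
      zero_mul, mul_one, one_mul, if_pos rfl, one_ne_zero, if_true, if_false, reduceIte] <;>
    module
end

section
/- Let $(\Phi,\mathcal{P})$ be a representation of a 3-Lie superalgebra $\mathcal{Q}$ and let $\Omega$ be an even 2-cocycle. If $\Omega'=\Omega+\delta_{\Phi}\xi$ for an even linear map $\xi:\mathcal{Q}\to\mathcal{P}$, then the 3-Lie superalgebras $\mathcal{L}_{\Phi,\Omega}$ and $\mathcal{L}_{\Phi,\Omega'}$ on $\mathcal{Q}\oplus\mathcal{P}$ are isomorphic via the even linear map $x+u\mapsto x+u+\xi(x)$, which is a 3-Lie superalgebra isomorphism. -/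
variable {k Pm Lm Qm G : Type*} [Field k] [AddCommGroup Pm] [Module k Pm]
  [AddCommGroup Lm] [Module k Lm] [AddCommGroup Qm] [Module k Qm]
  [AddCommGroup G] [Module k G]

lemma gsign_add_eq {k : Type*} [Field k] (a b : ZMod 2) :
    gsign k (a + b) = gsign k a * gsign k b := by
  have h : (1 + 1 : ZMod 2) = 0 := rfl
  have h1 : (1 : ZMod 2) ≠ 0 := by decide
  have hc : ∀ t : ZMod 2, t = 0 ∨ t = 1 := by decide
  rcases hc a with rfl | rfl <;> rcases hc b with rfl | rfl <;> simp [gsign, h, h1]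

lemma gsign_ne_zero {k : Type*} [Field k] (a : ZMod 2) : gsign k a ≠ 0 := by
  unfold gsign; split
  · exact one_ne_zero
  · exact neg_ne_zero.mpr one_ne_zero

/-- cohomologous even cocycles `Ω' = Ω + δ_Φ ξ` give isomorphic
twisted semidirect products via `x + u ↦ x + u + ξ(x)`. -/
theorem cohomologous_cocycles_isomorphic_extensions
    (TQ : TLSA k Qm) (Pgr : ZMod 2 → Submodule k Pm)
    (Φ : Qm → Qm → Pm → Pm) (hΦ : IsTLSARep TQ Pgr Φ)
    (Om Om' : Qm → Qm → Qm → Pm)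
    (hOme : Even3 TQ Pgr Om) (hOmc : IsCocycle2 TQ Φ Om)
    (ξ : Qm →ₗ[k] Pm) (hξe : ∀ (a : ZMod 2) x, x ∈ TQ.gr a → ξ x ∈ Pgr a)
    (hOm' : ∀ (a b c : ZMod 2) x y z, x ∈ TQ.gr a → y ∈ TQ.gr b → z ∈ TQ.gr c →
      Om' x y z = Om x y z + (- ξ (TQ.br x y z) + Φ x y (ξ z)
        + gsign k (a * (b + c)) • Φ y z (ξ x) + gsign k (c * (a + b)) • Φ z x (ξ y)))
    (T T' : TLSA k (Qm × Pm))
    (hTgr : ∀ a, T.gr a = (TQ.gr a).prod (Pgr a))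
    (hTbr : ∀ (a b c : ZMod 2) (x y z : Qm) (u v w : Pm),
      x ∈ TQ.gr a → y ∈ TQ.gr b → z ∈ TQ.gr c → u ∈ Pgr a → v ∈ Pgr b → w ∈ Pgr c →
      T.br (x, u) (y, v) (z, w)
        = (TQ.br x y z, Om x y z + Φ x y w + gsign k (b * c) • Φ z x v
            + gsign k (a * (b + c)) • Φ y z u))
    (hT'gr : ∀ a, T'.gr a = (TQ.gr a).prod (Pgr a))
    (hT'br : ∀ (a b c : ZMod 2) (x y z : Qm) (u v w : Pm),
      x ∈ TQ.gr a → y ∈ TQ.gr b → z ∈ TQ.gr c → u ∈ Pgr a → v ∈ Pgr b → w ∈ Pgr c →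
      T'.br (x, u) (y, v) (z, w)
        = (TQ.br x y z, Om' x y z + Φ x y w + gsign k (b * c) • Φ z x v
            + gsign k (a * (b + c)) • Φ y z u)) :
    IsTLSAHom T' T (fun p : Qm × Pm => (p.1, p.2 + ξ p.1)) ∧
      Function.Bijective (fun p : Qm × Pm => (p.1, p.2 + ξ p.1)) := by
  classical
  set f : Qm × Pm → Qm × Pm := fun p => (p.1, p.2 + ξ p.1) with hf
  have flin : IsLinearMap k f := by
    constructor
    · intro p q
      refine Prod.ext rfl ?_
      show (p + q).2 + ξ (p + q).1 = (p.2 + ξ p.1) + (q.2 + ξ q.1)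
      simp only [Prod.fst_add, Prod.snd_add, map_add]
      abel
    · intro c p
      refine Prod.ext rfl ?_
      show (c • p).2 + ξ (c • p).1 = c • (p.2 + ξ p.1)
      simp only [Prod.smul_fst, Prod.smul_snd, map_smul, smul_add]
  have fgr : ∀ (a : ZMod 2) p, p ∈ T'.gr a → f p ∈ T.gr a := by
    intro a p hp
    rw [hT'gr, Submodule.mem_prod] at hp
    rw [hTgr, Submodule.mem_prod]
    exact ⟨hp.1, add_mem hp.2 (hξe a p.1 hp.1)⟩
  have hΦl3 := hΦ.2.2.1
  have hz1 : ∀ y v, Φ 0 y v = 0 := fun y v => (hΦ.1 y v).map_zero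
  have hz2 : ∀ x v, Φ x 0 v = 0 := fun x v => (hΦ.2.1 x v).map_zero
  have hz3 : ∀ x y, Φ x y 0 = 0 := fun x y => (hΦl3 x y).map_zero
  -- Φ z x v = - Φ x z v for homogeneous arguments, derived from skewness of T
  have key : ∀ (a b c : ZMod 2) (x z : Qm) (v : Pm), x ∈ TQ.gr a → z ∈ TQ.gr c →
      v ∈ Pgr b → Φ z x v = - Φ x z v := by
    intro a b c x z v hx hz hv
    have h0Q : ∀ d : ZMod 2, (0:Qm) ∈ TQ.gr d := fun d => zero_mem _
    have h0P : ∀ d : ZMod 2, (0:Pm) ∈ Pgr d := fun d => zero_mem _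
    have m2 : (((0:Qm), v) : Qm × Pm) ∈ T.gr b := by
      rw [hTgr, Submodule.mem_prod]; exact ⟨h0Q b, hv⟩
    have m2' : (((0:Qm), (0:Pm)) : Qm × Pm) ∈ T.gr b := by
      rw [hTgr, Submodule.mem_prod]; exact ⟨h0Q b, h0P b⟩
    have m3 : ((z, (0:Pm)) : Qm × Pm) ∈ T.gr c := by
      rw [hTgr, Submodule.mem_prod]; exact ⟨hz, h0P c⟩
    have E := T.skew₂ b c ((x, (0:Pm)) : Qm × Pm) ((0:Qm), v) (z, (0:Pm)) m2 m3
    have E0 := T.skew₂ b c ((x, (0:Pm)) : Qm × Pm) ((0:Qm), (0:Pm)) (z, (0:Pm)) m2' m3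
    rw [hTbr a b c x 0 z 0 v 0 hx (h0Q b) hz (h0P a) hv (h0P c),
      hTbr a c b x z 0 0 0 v hx hz (h0Q b) (h0P a) (h0P c) hv] at E
    rw [hTbr a b c x 0 z 0 0 0 hx (h0Q b) hz (h0P a) (h0P b) (h0P c),
      hTbr a c b x z 0 0 0 0 hx hz (h0Q b) (h0P a) (h0P c) (h0P b)] at E0
    have hE := congrArg Prod.snd E
    have hE0 := congrArg Prod.snd E0
    simp only [Prod.snd_neg, Prod.smul_snd, hz1, hz2, hz3, smul_zero, add_zero] at hE hE0
    rw [smul_add] at hE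
    rw [← hE0] at hE
    have h3 : gsign k (b * c) • Φ z x v = gsign k (b * c) • (-Φ x z v) := by
      rw [add_left_cancel hE, neg_smul, smul_neg]
    exact smul_right_injective Pm (gsign_ne_zero (k := k) (b * c)) h3
  -- the sign correction lemma
  have L : ∀ (a b c : ZMod 2) (x z : Qm) (v : Pm), x ∈ TQ.gr a → z ∈ TQ.gr c →
      v ∈ Pgr b → gsign k (a * c) • Φ x z v = Φ x z v := by
    intro a b c x z v hx hz hv
    by_cases h : a * c = 0
    · rw [h]; simp [gsign]
    · have hac : a * c = 1 := by
        have : ∀ t : ZMod 2, t ≠ 0 → t = 1 := by decide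
        exact this _ h
      have h1 := key a b c x z v hx hz hv
      have h2 := hΦ.2.2.2.2.1 c a z x hz hx v
      rw [mul_comm c a, hac] at h2
      have hg1 : gsign k 1 = (-1 : k) := by simp [gsign]
      rw [hg1] at h2
      rw [hac, hg1]
      rw [neg_smul, neg_smul, one_smul, neg_neg] at h2
      -- h2 : Φ z x v = Φ x z v ; h1 : Φ z x v = - Φ x z v
      rw [neg_smul, one_smul]
      rw [h2] at h1
      exact h1.symm
  -- the homogeneous case of the bracket identity
  have H : ∀ (a b c : ZMod 2) (p q r : Qm × Pm), p ∈ T.gr a → q ∈ T.gr b → r ∈ T.gr c →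
      f (T'.br p q r) = T.br (f p) (f q) (f r) := by
    intro a b c p q r hp hq hr
    rw [hTgr, Submodule.mem_prod] at hp hq hr
    obtain ⟨x, u⟩ := p; obtain ⟨y, v⟩ := q; obtain ⟨z, w⟩ := r
    rw [hT'br a b c x y z u v w hp.1 hq.1 hr.1 hp.2 hq.2 hr.2]
    show (TQ.br x y z, _ + ξ (TQ.br x y z)) = _
    rw [show f (x, u) = (x, u + ξ x) from rfl, show f (y, v) = (y, v + ξ y) from rfl,
      show f (z, w) = (z, w + ξ z) from rfl]
    rw [hTbr a b c x y z (u + ξ x) (v + ξ y) (w + ξ z) hp.1 hq.1 hr.1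
      (add_mem hp.2 (hξe a x hp.1)) (add_mem hq.2 (hξe b y hq.1))
      (add_mem hr.2 (hξe c z hr.1))]
    refine Prod.ext rfl ?_
    show _ + ξ (TQ.br x y z) = _
    rw [hOm' a b c x y z hp.1 hq.1 hr.1]
    rw [(hΦl3 x y).map_add w (ξ z), (hΦl3 z x).map_add v (ξ y), (hΦl3 y z).map_add u (ξ x)]
    rw [smul_add, smul_add]
    have hs : gsign k (c * (a + b)) • Φ z x (ξ y) = gsign k (b * c) • Φ z x (ξ y) := by
      have he : c * (a + b) = c * a + b * c := by ring
      rw [he, gsign_add_eq, mul_comm (gsign k (c * a)) (gsign k (b * c)), mul_smul]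
      congr 1
      exact L c b a z x (ξ y) hr.1 hp.1 (hξe b y hq.1)
    rw [hs]
    dsimp only
    abel
  -- decomposition into homogeneous components
  have hcase : ∀ i : ZMod 2, i = 0 ∨ i = 1 := by decide
  have hdec : ∀ p : Qm × Pm, ∃ p0 p1, p0 ∈ T.gr 0 ∧ p1 ∈ T.gr 1 ∧ p = p0 + p1 := by
    intro p
    have htop : T.gr 0 ⊔ T.gr 1 = ⊤ := by
      refine le_antisymm le_top ?_
      rw [← T.decomp.submodule_iSup_eq_top]
      refine iSup_le fun i => ?_
      rcases hcase i with h | h <;> rw [h]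
      · exact le_sup_left
      · exact le_sup_right
    have : p ∈ T.gr 0 ⊔ T.gr 1 := by rw [htop]; trivial
    rw [Submodule.mem_sup] at this
    obtain ⟨p0, h0, p1, h1, hsum⟩ := this
    exact ⟨p0, p1, h0, h1, hsum.symm⟩
  have hom_br : ∀ p q r, f (T'.br p q r) = T.br (f p) (f q) (f r) := by
    intro p q r
    obtain ⟨p0, p1, hp0, hp1, rfl⟩ := hdec p
    obtain ⟨q0, q1, hq0, hq1, rfl⟩ := hdec q
    obtain ⟨r0, r1, hr0, hr1, rfl⟩ := hdec r
    have expand' : T'.br (p0 + p1) (q0 + q1) (r0 + r1)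
        = ((T'.br p0 q0 r0 + T'.br p0 q0 r1) + (T'.br p0 q1 r0 + T'.br p0 q1 r1))
          + ((T'.br p1 q0 r0 + T'.br p1 q0 r1) + (T'.br p1 q1 r0 + T'.br p1 q1 r1)) := by
      rw [(T'.lin₁ (q0 + q1) (r0 + r1)).map_add p0 p1,
        (T'.lin₂ p0 (r0 + r1)).map_add q0 q1, (T'.lin₂ p1 (r0 + r1)).map_add q0 q1,
        (T'.lin₃ p0 q0).map_add r0 r1, (T'.lin₃ p0 q1).map_add r0 r1,
        (T'.lin₃ p1 q0).map_add r0 r1, (T'.lin₃ p1 q1).map_add r0 r1]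
    have expandT : T.br (f p0 + f p1) (f q0 + f q1) (f r0 + f r1)
        = ((T.br (f p0) (f q0) (f r0) + T.br (f p0) (f q0) (f r1))
            + (T.br (f p0) (f q1) (f r0) + T.br (f p0) (f q1) (f r1)))
          + ((T.br (f p1) (f q0) (f r0) + T.br (f p1) (f q0) (f r1))
            + (T.br (f p1) (f q1) (f r0) + T.br (f p1) (f q1) (f r1))) := by
      rw [(T.lin₁ (f q0 + f q1) (f r0 + f r1)).map_add (f p0) (f p1),
        (T.lin₂ (f p0) (f r0 + f r1)).map_add (f q0) (f q1),
        (T.lin₂ (f p1) (f r0 + f r1)).map_add (f q0) (f q1),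
        (T.lin₃ (f p0) (f q0)).map_add (f r0) (f r1),
        (T.lin₃ (f p0) (f q1)).map_add (f r0) (f r1),
        (T.lin₃ (f p1) (f q0)).map_add (f r0) (f r1),
        (T.lin₃ (f p1) (f q1)).map_add (f r0) (f r1)]
    rw [expand']
    simp only [flin.map_add]
    rw [expandT]
    rw [H 0 0 0 p0 q0 r0 hp0 hq0 hr0, H 0 0 1 p0 q0 r1 hp0 hq0 hr1,
      H 0 1 0 p0 q1 r0 hp0 hq1 hr0, H 0 1 1 p0 q1 r1 hp0 hq1 hr1,
      H 1 0 0 p1 q0 r0 hp1 hq0 hr0, H 1 0 1 p1 q0 r1 hp1 hq0 hr1,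
      H 1 1 0 p1 q1 r0 hp1 hq1 hr0, H 1 1 1 p1 q1 r1 hp1 hq1 hr1]
  refine ⟨⟨flin, fgr, hom_br⟩, ?_, ?_⟩
  · intro p q hpq
    simp only [hf, Prod.mk.injEq] at hpq
    obtain ⟨h1, h2⟩ := hpq
    rw [h1] at h2
    have h3 := add_right_cancel h2
    exact Prod.ext h1 h3
  · intro p
    refine ⟨(p.1, p.2 - ξ p.1), ?_⟩
    simp only [hf, sub_add_cancel]
end

section
/- Let $\mathcal{Q}$ and $\mathcal{P}$ be 3-Lie superalgebras with $\mathcal{P}$ abelian (viewed as a $\mathcal{Q}$-module via a representation $\Phi$), and let $\mathcal{D}_q$ be a superderivation of $\mathcal{Q}$ of degree $\alpha$. In the semidirect product $\mathcal{L}_{\Phi,0}=\mathcal{Q}\oplus\mathcal{P}$ (i.e. $\Omega=0$), a pair $(\mathcal{D}_p,\mathcal{D}_q)$ is extensible with extension $\mathcal{D}_l(x+v)=\mathcal{D}_q(x)+\mathcal{D}_p(v)$ if and only if $(\mathcal{D}_p,\mathcal{D}_q)$ is compatible with respect to $\Phi$. -/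
variable {k Pm Lm Qm G : Type*} [Field k] [AddCommGroup Pm] [Module k Pm]
  [AddCommGroup Lm] [Module k Lm] [AddCommGroup Qm] [Module k Qm]
  [AddCommGroup G] [Module k G]

/-- in the semidirect product `L_{Φ,0} = Q ⊕ P`, the pair
`(Dp, Dq)` is extensible via `Dl(x + v) = Dq(x) + Dp(v)` if and only if it is
compatible with respect to `Φ`. -/
theorem semidirect_extensible_iff_compatible
    (TQ : TLSA k Qm) (Pgr : ZMod 2 → Submodule k Pm) (hPd : DirectSum.IsInternal Pgr)
    (Φ : Qm → Qm → Pm → Pm) (hΦ : IsTLSARep TQ Pgr Φ)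
    (T0 : TLSA k (Qm × Pm))
    (hgr : ∀ a, T0.gr a = (TQ.gr a).prod (Pgr a))
    (hbr : ∀ (a b c : ZMod 2) (x y z : Qm) (u v w : Pm),
      x ∈ TQ.gr a → y ∈ TQ.gr b → z ∈ TQ.gr c →
      u ∈ Pgr a → v ∈ Pgr b → w ∈ Pgr c →
      T0.br (x, u) (y, v) (z, w)
        = (TQ.br x y z, Φ x y w + gsign k (b * c) • Φ z x v
            + gsign k (a * (b + c)) • Φ y z u))
    (α : ZMod 2)
    (Dp : Pm →ₗ[k] Pm) (hDp : ∀ (a : ZMod 2) v, v ∈ Pgr a → Dp v ∈ Pgr (a + α))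
    (Dq : Qm →ₗ[k] Qm) (hDq : IsSDer TQ α Dq) :
    IsSDer T0 α (Dq.prodMap Dp) ↔ Compatible TQ Pgr Φ α Dp Dq := by
  obtain ⟨l1, l2, l3, hgrade, hskew, hf1, hf2⟩ := hΦ
  have two : ∀ r : ZMod 2, r = 0 ∨ r = 1 := by decide
  have gs_sq : ∀ r : ZMod 2, gsign k r * gsign k r = 1 := by
    intro r; rcases two r with rfl|rfl <;> norm_num [gsign]
  have z0Q : ∀ c' : ZMod 2, (0:Qm) ∈ TQ.gr c' := fun c' => (TQ.gr c').zero_mem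
  have z0P : ∀ c' : ZMod 2, (0:Pm) ∈ Pgr c' := fun c' => (Pgr c').zero_mem
  have z1 : ∀ (q : Qm) (v : Pm), Φ 0 q v = 0 := fun q v => (l1 q v).map_zero
  have z2 : ∀ (q : Qm) (v : Pm), Φ q 0 v = 0 := fun q v => (l2 q v).map_zero
  have z3 : ∀ p q : Qm, Φ p q 0 = 0 := fun p q => (l3 p q).map_zero
  have zb1 : ∀ p q : Qm, TQ.br 0 p q = 0 := fun p q => (TQ.lin₁ p q).map_zero
  have zb2 : ∀ p q : Qm, TQ.br p 0 q = 0 := fun p q => (TQ.lin₂ p q).map_zero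
  have zb3 : ∀ p q : Qm, TQ.br p q 0 = 0 := fun p q => (TQ.lin₃ p q).map_zero
  -- antisymmetry of Φ forced by skew₂ of T0
  have hK : ∀ (a b c : ZMod 2) (x y : Qm), x ∈ TQ.gr a → y ∈ TQ.gr b → ∀ w ∈ Pgr c,
      Φ x y w + Φ y x w = 0 := by
    intro a b c x y hx hy w hw
    have h := T0.skew₂ b c (x, (0:Pm)) (y, (0:Pm)) ((0:Qm), w)
      (by rw [hgr]; exact Submodule.mem_prod.mpr ⟨hy, z0P b⟩)
      (by rw [hgr]; exact Submodule.mem_prod.mpr ⟨z0Q c, hw⟩)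
    rw [hbr a b c x y 0 0 0 w hx hy (z0Q c) (z0P a) (z0P b) hw,
        hbr a c b x 0 y 0 w 0 hx (z0Q c) hy (z0P a) hw (z0P b)] at h
    simp only [z1, z2, z3, zb1, zb2, zb3, smul_zero, add_zero, zero_add] at h
    simp only [Prod.smul_mk, smul_zero, Prod.mk.injEq] at h
    obtain ⟨-, h2⟩ := h
    rw [h2, smul_smul, neg_mul, mul_comm c b, gs_sq, neg_one_smul]
    exact neg_add_cancel _
  have h2Φ : ∀ x y : Qm, x ∈ TQ.gr 1 → y ∈ TQ.gr 1 → ∀ (c' : ZMod 2), ∀ w ∈ Pgr c',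
      Φ x y w + Φ x y w = 0 := by
    intro x y hx hy c' w hw
    have h := hK 1 1 c' x y hx hy w hw
    have hs := hskew 1 1 x y hx hy w
    rw [show gsign k ((1:ZMod 2)*1) = -1 by norm_num [gsign]] at hs
    rw [neg_neg, one_smul] at hs
    rw [hs] at h ⊢; exact h
  constructor
  · -- extensible → compatible
    intro hD a b x y hx hy v
    have hgrv : ∀ (c : ZMod 2), ∀ v' ∈ Pgr c,
        Dp (Φ x y v') - gsign k (α*(a+b)) • Φ x y (Dp v')
          = Φ (Dq x) y v' + gsign k (α*a) • Φ x (Dq y) v' := by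
      intro c v' hv'
      have h := hD.2 a b c (x, (0:Pm)) (y, (0:Pm)) ((0:Qm), v')
        (by rw [hgr]; exact Submodule.mem_prod.mpr ⟨hx, z0P a⟩)
        (by rw [hgr]; exact Submodule.mem_prod.mpr ⟨hy, z0P b⟩)
        (by rw [hgr]; exact Submodule.mem_prod.mpr ⟨z0Q c, hv'⟩)
      simp only [LinearMap.prodMap_apply, map_zero] at h
      rw [hbr a b c x y 0 0 0 v' hx hy (z0Q c) (z0P a) (z0P b) hv',
          hbr (a+α) b c (Dq x) y 0 0 0 v' (hDq.1 a x hx) hy (z0Q c) (z0P (a+α)) (z0P b) hv',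
          hbr a (b+α) c x (Dq y) 0 0 0 v' hx (hDq.1 b y hy) (z0Q c) (z0P a) (z0P (b+α)) hv',
          hbr a b (c+α) x y 0 0 0 (Dp v') hx hy (z0Q (c+α)) (z0P a) (z0P b)
            (hDp c v' hv')] at h
      simp only [z1, z2, z3, zb1, zb2, zb3, smul_zero, add_zero, zero_add, map_zero] at h
      simp only [Prod.smul_mk, smul_zero, Prod.mk_add_mk, Prod.mk.injEq, add_zero] at h
      obtain ⟨-, h2⟩ := h
      linear_combination (norm := module) h2
    have hvtop : v ∈ ⨆ i, Pgr i := hPd.submodule_iSup_eq_top ▸ Submodule.mem_top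
    refine Submodule.iSup_induction Pgr
      (motive := fun v => Dp (Φ x y v) - gsign k (α*(a+b)) • Φ x y (Dp v)
        = Φ (Dq x) y v + gsign k (α*a) • Φ x (Dq y) v) hvtop
      (fun c v' hv' => hgrv c v' hv') ?_ ?_
    · simp only [z3, map_zero, smul_zero, sub_zero, add_zero]
    · intro v1 v2 h1 h2
      have e1 := (l3 x y).map_add v1 v2
      have e2 := (l3 (Dq x) y).map_add v1 v2
      have e3 := (l3 x (Dq y)).map_add v1 v2
      have e4 := (l3 x y).map_add (Dp v1) (Dp v2)
      simp only [e1, map_add, e2, e3, e4]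
      linear_combination (norm := module) h1 + h2
  · -- compatible → extensible
    intro hc
    constructor
    · intro a xp hxp
      rw [hgr] at hxp ⊢
      obtain ⟨h1, h2⟩ := Submodule.mem_prod.mp hxp
      exact Submodule.mem_prod.mpr ⟨hDq.1 a xp.1 h1, hDp a xp.2 h2⟩
    · rintro a b c ⟨x, u⟩ ⟨y, v⟩ ⟨z, w⟩ hX hY hZ
      rw [hgr] at hX hY hZ
      obtain ⟨hx, hu⟩ := Submodule.mem_prod.mp hX
      obtain ⟨hy, hv⟩ := Submodule.mem_prod.mp hY
      obtain ⟨hz, hw⟩ := Submodule.mem_prod.mp hZ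
      rw [hbr a b c x y z u v w hx hy hz hu hv hw]
      simp only [LinearMap.prodMap_apply]
      rw [hbr (a+α) b c (Dq x) y z (Dp u) v w (hDq.1 a x hx) hy hz (hDp a u hu) hv hw,
          hbr a (b+α) c x (Dq y) z u (Dp v) w hx (hDq.1 b y hy) hz hu (hDp b v hv) hw,
          hbr a b (c+α) x y (Dq z) u v (Dp w) hx hy (hDq.1 c z hz) hu hv (hDp c w hw)]
      simp only [Prod.smul_mk, Prod.mk_add_mk, Prod.mk.injEq]
      refine ⟨hDq.2 a b c x y z hx hy hz, ?_⟩
      have Hxy := hc a b x y hx hy w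
      have Hzx := hc c a z x hz hx v
      have Hyz := hc b c y z hy hz u
      have gs0 : gsign k (0:ZMod 2) = 1 := by norm_num [gsign]
      have gs1 : gsign k (1:ZMod 2) = -1 := by norm_num [gsign]
      have hN : Φ (Dq z) x v - gsign k (α*a) • Φ (Dq z) x v
          = Φ z (Dq x) v - gsign k (α*c) • Φ z (Dq x) v := by
        rcases two α with rfl|rfl
        · simp only [zero_mul, gs0, one_smul, sub_self]
        · rcases two a with rfl|rfl <;> rcases two c with rfl|rfl
          · simp only [mul_zero, gs0, one_smul, sub_self]
          · have h := h2Φ z (Dq x) hz (by simpa using hDq.1 0 x hx) b v hv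
            simp only [mul_zero, mul_one, gs0, gs1, one_smul, sub_self, neg_smul,
              sub_neg_eq_add]
            linear_combination (norm := module) -h
          · have h := h2Φ (Dq z) x (by simpa using hDq.1 0 z hz) hx b v hv
            simp only [mul_zero, mul_one, gs0, gs1, one_smul, sub_self, neg_smul,
              sub_neg_eq_add]
            linear_combination (norm := module) h
          · have h2zx := h2Φ z x hz hx b v hv
            have h2zx' := h2Φ z x hz hx (b+1) (Dp v) (hDp b v hv)
            have hDp0 : Dp (Φ z x v) + Dp (Φ z x v) = 0 := by
              rw [← map_add, h2zx, map_zero]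
            have Hzx' := hc 1 1 z x hz hx v
            rw [show ((1:ZMod 2)*(1+1)) = 0 by decide, show ((1:ZMod 2)*1) = 1 by decide,
              gs0, gs1] at Hzx'
            rw [show ((1:ZMod 2)*1) = 1 by decide, gs1]
            linear_combination (norm := module) -Hzx' - Hzx' + hDp0 - h2zx'
      rw [map_add, map_add, map_smul, map_smul]
      rcases two α with rfl|rfl <;> rcases two a with rfl|rfl <;>
          rcases two b with rfl|rfl <;> rcases two c with rfl|rfl <;>
        (simp (config := {decide := true}) [gsign] at Hxy Hzx Hyz ⊢ <;>
          try simp (config := {decide := true}) [gsign] at hN) <;>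
        first
        | linear_combination (norm := module) Hxy + Hzx + Hyz
        | linear_combination (norm := module) Hxy + Hzx - Hyz
        | linear_combination (norm := module) Hxy - Hzx + Hyz
        | linear_combination (norm := module) Hxy - Hzx - Hyz
        | linear_combination (norm := module) Hxy + Hzx + Hyz + hN
        | linear_combination (norm := module) Hxy + Hzx - Hyz + hN
        | linear_combination (norm := module) Hxy - Hzx + Hyz - hN
        | linear_combination (norm := module) Hxy - Hzx - Hyz - hN
end
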